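/- arXiv:2507.16694 — 10 statements merged into one kernel-verified Lean document; each statement's English description precedes it below -/
import Mathlib

section
/- Let σ be a field automorphism of F_q with σ ≠ id. If M is an (n+1)×(n+1) matrix over F_q such that ξ·M·x^σ = 0 for every column vector x ∈ F_q^{n+1} and every row vector ξ with ξ·x = 0, then M = 0. Consequently the pure tensors x^σ·ξ (outer products of the column x^σ with the row ξ) taken over all pairs with ξ·x = 0 span the full space of (n+1)×(n+1) matrices over F_q, so the code C(Λ_σ) has dimension (n+1)². -/
/-!
Write `B_M(ξ, x) = ξ M x^σ`. Testing `B_M` on incident pairs `(e_i, e_j)` with `i ≠ j` kills the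
off-diagonal entries of `M`; testing it on `(a e_i - e_j, e_i + a e_j)` then gives
`a M_ii = σ(a) M_jj` for every `a`, so `M` is scalar and `(a - σ a) M_ii = 0`, and any `a` moved by
`σ` forces `M = 0`. For the span, a linear functional on matrices vanishing on every `x^σ ξ` with
`ξ x = 0` is `A ↦ tr(N A)` for a matrix `N` satisfying the same hypothesis as `M`, hence is zero.
-/

open Matrix

section DualMatrix

variable {m n R : Type*} [Fintype m] [Fintype n] [DecidableEq m] [DecidableEq n] [CommSemiring R]

/-- The matrix `N` with `φ A = tr (N A)`. -/
def dualMatrix (φ : Module.Dual R (Matrix m n R)) : Matrix n m R :=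
  of fun q p => φ (single p q 1)

lemma apply_eq_sum_mul_dualMatrix (φ : Module.Dual R (Matrix m n R)) (A : Matrix m n R) :
    φ A = ∑ p, ∑ q, A p q * dualMatrix φ q p := by
  conv_lhs => rw [matrix_eq_sum_single A]
  simp only [map_sum]
  refine Finset.sum_congr rfl fun p _ => Finset.sum_congr rfl fun q _ => ?_
  rw [show single p q (A p q) = A p q • single p q 1 by rw [smul_single, smul_eq_mul, mul_one],
    map_smul, smul_eq_mul]
  rfl

lemma apply_vecMulVec (φ : Module.Dual R (Matrix m n R)) (u : m → R) (v : n → R) :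
    φ (vecMulVec u v) = (v ᵥ* dualMatrix φ) ⬝ᵥ u := by
  simp only [apply_eq_sum_mul_dualMatrix, vecMulVec_apply, dotProduct, vecMul, Finset.sum_mul]
  refine Finset.sum_congr rfl fun p _ => Finset.sum_congr rfl fun q _ => ?_
  ring

lemma eq_zero_of_dualMatrix_eq_zero {φ : Module.Dual R (Matrix m n R)} (h : dualMatrix φ = 0) :
    φ = 0 := by
  ext A
  simp [apply_eq_sum_mul_dualMatrix, h]

end DualMatrix

section VanishesOnIncidentPairs

variable {ι R : Type*} [DecidableEq ι] [CommRing R]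

lemma single_vecMul_dotProduct_single [Fintype ι] (M : Matrix ι ι R) (i j : ι) (a b : R) :
    (Pi.single i a ᵥ* M) ⬝ᵥ Pi.single j b = a * M i j * b := by
  rw [single_vecMul, dotProduct_single, Pi.smul_apply, smul_eq_mul, row_apply]

lemma map_comp_single (σ : R →+* R) (j : ι) (b : R) :
    (fun k => σ ((Pi.single j b : ι → R) k)) = Pi.single j (σ b) :=
  funext (Pi.apply_single (fun _ => σ) (fun _ => map_zero σ) j b)

variable [Fintype ι]

/-- `ξ ⬝ᵥ x = 0` says that the point `x` lies on the hyperplane `ξ`. -/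
def VanishesOnIncidentPairs (σ : R →+* R) (M : Matrix ι ι R) : Prop :=
  ∀ x ξ : ι → R, ξ ⬝ᵥ x = 0 → (ξ ᵥ* M) ⬝ᵥ (fun i => σ (x i)) = 0

namespace VanishesOnIncidentPairs

variable {σ : R →+* R} {M : Matrix ι ι R}

lemma apply_eq_zero_of_ne (hM : VanishesOnIncidentPairs σ M) {i j : ι} (hij : i ≠ j) :
    M i j = 0 := by
  have h := hM (Pi.single j 1) (Pi.single i 1) (by simp [hij])
  rwa [map_comp_single, single_vecMul_dotProduct_single, map_one, one_mul, mul_one] at h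

lemma mul_apply_diag_eq (hM : VanishesOnIncidentPairs σ M) {i j : ι} (hij : i ≠ j) (a : R) :
    a * M i i = σ a * M j j := by
  have hx : (Pi.single i a - Pi.single j 1 : ι → R) ⬝ᵥ (Pi.single i 1 + Pi.single j a) = 0 := by
    simp [dotProduct_add, hij, hij.symm]
  have hσx : (fun k => σ ((Pi.single i 1 + Pi.single j a : ι → R) k))
      = Pi.single i 1 + Pi.single j (σ a) := by
    funext k
    rw [Pi.add_apply, map_add, congrFun (map_comp_single σ i 1) k,
      congrFun (map_comp_single σ j a) k, map_one, Pi.add_apply]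
  have h := hM _ _ hx
  rw [hσx] at h
  simp only [sub_vecMul, sub_dotProduct, dotProduct_add, single_vecMul_dotProduct_single,
    hM.apply_eq_zero_of_ne hij, hM.apply_eq_zero_of_ne hij.symm] at h
  linear_combination h

lemma eq_zero [Nontrivial ι] [NoZeroDivisors R] (hM : VanishesOnIncidentPairs σ M)
    (hσ : σ ≠ RingHom.id R) : M = 0 := by
  obtain ⟨a, ha⟩ : ∃ a, σ a ≠ a := by
    by_contra! h
    exact hσ (RingHom.ext h)
  ext i j
  rcases eq_or_ne i j with rfl | hij
  · obtain ⟨k, hki⟩ := exists_ne i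
    have hscalar : M i i = M k k := by simpa using hM.mul_apply_diag_eq hki.symm 1
    have hmoved : (a - σ a) * M i i = 0 := by
      linear_combination hM.mul_apply_diag_eq hki.symm a - σ a * hscalar
    exact (mul_eq_zero.1 hmoved).resolve_left (sub_ne_zero.2 ha.symm)
  · exact hM.apply_eq_zero_of_ne hij

end VanishesOnIncidentPairs

end VanishesOnIncidentPairs

lemma span_vecMulVec_incident_eq_top {ι K : Type*} [Fintype ι] [DecidableEq ι] [Nontrivial ι]
    [Field K] {σ : K →+* K} (hσ : σ ≠ RingHom.id K) :
    Submodule.span K {A : Matrix ι ι K |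
      ∃ x ξ : ι → K, ξ ⬝ᵥ x = 0 ∧ A = vecMulVec (fun i => σ (x i)) ξ} = ⊤ := by
  rw [← Submodule.dualAnnihilator_eq_bot_iff, Submodule.eq_bot_iff]
  intro φ hφ
  have hN : VanishesOnIncidentPairs σ (dualMatrix φ) := fun x ξ hξx => by
    rw [← apply_vecMulVec]
    exact (Submodule.mem_dualAnnihilator φ).1 hφ _ (Submodule.subset_span ⟨x, ξ, hξx, rfl⟩)
  exact eq_zero_of_dualMatrix_eq_zero (hN.eq_zero hσ)

theorem stmt_0_general (F : Type) [Field F] (n : ℕ) (hn : 2 ≤ n)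
    (σ : F ≃+* F) (hσ : σ ≠ RingEquiv.refl F)
    (M : Matrix (Fin (n + 1)) (Fin (n + 1)) F)
    (hM : ∀ x ξ : Fin (n + 1) → F, ξ ⬝ᵥ x = 0 →
      (ξ ᵥ* M) ⬝ᵥ (fun i => σ (x i)) = 0) :
    M = 0 ∧
    Submodule.span F {A : Matrix (Fin (n + 1)) (Fin (n + 1)) F |
        ∃ x ξ : Fin (n + 1) → F, ξ ⬝ᵥ x = 0 ∧ A = vecMulVec (fun i => σ (x i)) ξ} = ⊤ ∧
    Module.finrank F (Matrix (Fin (n + 1)) (Fin (n + 1)) F) = (n + 1) ^ 2 := by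
  have : Nontrivial (Fin (n + 1)) := Fin.nontrivial_iff_two_le.2 (by omega)
  have hσ' : (σ : F →+* F) ≠ RingHom.id F := fun h =>
    hσ (RingEquiv.ext fun a => RingHom.congr_fun h a)
  refine ⟨VanishesOnIncidentPairs.eq_zero (σ := (σ : F →+* F)) hM hσ',
    span_vecMulVec_incident_eq_top (σ := (σ : F →+* F)) hσ', ?_⟩
  rw [Module.finrank_matrix]
  simp [sq]

theorem stmt_0 (F : Type) [Field F] [Fintype F] (n : ℕ) (hn : 2 ≤ n)
    (σ : F ≃+* F) (hσ : σ ≠ RingEquiv.refl F)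
    (M : Matrix (Fin (n + 1)) (Fin (n + 1)) F)
    (hM : ∀ x ξ : Fin (n + 1) → F, ξ ⬝ᵥ x = 0 →
      (ξ ᵥ* M) ⬝ᵥ (fun i => σ (x i)) = 0) :
    M = 0 ∧
    Submodule.span F {A : Matrix (Fin (n + 1)) (Fin (n + 1)) F |
        ∃ x ξ : Fin (n + 1) → F, ξ ⬝ᵥ x = 0 ∧ A = vecMulVec (fun i => σ (x i)) ξ} = ⊤ ∧
    Module.finrank F (Matrix (Fin (n + 1)) (Fin (n + 1)) F) = (n + 1) ^ 2 :=
  stmt_0_general F n hn σ hσ M hM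
end

section
/- For every (n+1)×(n+1) matrix M over F_q and every field automorphism σ of F_q, the number of pairs of projective points ([x],[ξ]) with ξ·x = 0 and ξ·M·x^σ = 0 equals (q^{n+1}−1)(q^{n−1}−1)/(q−1)² + θ_M·q^{n−1}. -/
/-!
For a fixed point `[ξ]`, write `η := σ⁻¹(ξ M)`; since `σ(η·x) = ξ·M·x^σ`, the points `[x]`
incident with `[ξ]` are the points of the subspace `ker ξ ∩ ker η`. This subspace has codimension
`1` when `η` is a multiple of `ξ` (that is, when `[ξ]` is counted by `θ_M`) and codimension `2`
otherwise, so `[ξ]` contributes `[n - 1]_q + q^(n-1)` or `[n - 1]_q` points, where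
`[k]_q = 1 + q + ⋯ + q^(k-1)`. Summing over the `[n + 1]_q` points `[ξ]` gives
`[n + 1]_q [n - 1]_q + θ_M q^(n-1)`.
-/

open Matrix

/-- `theta σ M` : the number of projective points `[ξ]` (ξ a nonzero row vector) such that
`ξ·M = λ·ξ^σ` for some `λ ∈ F`. -/
noncomputable def theta {F : Type} [Field F] [Fintype F] {n : ℕ}
    (σ : F ≃+* F) (M : Matrix (Fin (n + 1)) (Fin (n + 1)) F) : ℕ :=
  Nat.card {ξ : Projectivization F (Fin (n + 1) → F) //
    ∃ l : F, ξ.rep ᵥ* M = l • (fun i => σ (ξ.rep i))}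

open Module Submodule Finset
open scoped LinearAlgebra.Projectivization

theorem Nat.card_subtype_prod_eq_sum {α β : Type*} [Finite α] [Fintype β] (R : α → β → Prop) :
    Nat.card {p : α × β // R p.1 p.2} = ∑ b, Nat.card {a // R a b} := by
  rw [← Nat.card_sigma]
  exact Nat.card_congr (((Equiv.prodComm α β).subtypeEquiv fun _ => Iff.rfl).trans
    (Equiv.subtypeProdEquivSigmaSubtype fun b a => R a b))

namespace Projectivization

variable {K V : Type*} [Field K] [AddCommGroup V] [Module K V]

theorem range_map_subtype (W : Submodule K V) :
    Set.range (map W.subtype W.injective_subtype) = {p : ℙ K V | p.rep ∈ W} := by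
  ext p
  constructor
  · rintro ⟨p, rfl⟩
    induction p using Projectivization.ind with
    | h w hw =>
      obtain ⟨a, ha⟩ := exists_smul_eq_mk_rep K (w : V) (by simpa using hw)
      simp [map_mk, ← ha]
  · intro hp
    refine ⟨mk K ⟨p.rep, hp⟩ (by simpa using p.rep_nonzero), ?_⟩
    simp [map_mk]

theorem card_subtype_rep_mem (W : Submodule K V) :
    Nat.card {p : ℙ K V // p.rep ∈ W} = Nat.card (ℙ K W) := by
  rw [Nat.card_congr (Equiv.ofInjective _ (map_injective W.subtype W.injective_subtype)),
    range_map_subtype]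
  rfl

end Projectivization

theorem Submodule.dualCoannihilator_span_singleton {K V : Type*} [Field K] [AddCommGroup V]
    [Module K V] (f : Dual K V) :
    (K ∙ f).dualCoannihilator = LinearMap.ker f := by
  ext x
  simp only [mem_dualCoannihilator, mem_span_singleton, LinearMap.mem_ker, forall_exists_index,
    forall_apply_eq_imp_iff, LinearMap.smul_apply, smul_eq_mul, mul_eq_zero]
  exact ⟨fun h => (h 1).resolve_left one_ne_zero, fun h _ => Or.inr h⟩

namespace Module.Dual

variable {K V : Type*} [Field K] [AddCommGroup V] [Module K V] [FiniteDimensional K V]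
  {f g : Dual K V}

theorem finrank_ker_inf_ker_of_mem_span (hf : f ≠ 0) (hg : g ∈ K ∙ f) :
    finrank K ↥(LinearMap.ker f ⊓ LinearMap.ker g) + 1 = finrank K V := by
  obtain ⟨a, rfl⟩ := mem_span_singleton.1 hg
  have : LinearMap.ker f ≤ LinearMap.ker (a • f) := fun x hx => by simp_all
  rw [inf_eq_left.2 this, finrank_ker_add_one_of_ne_zero hf]

theorem finrank_ker_inf_ker_of_notMem_span (hf : f ≠ 0) (hg : g ∉ K ∙ f) :
    finrank K ↥(LinearMap.ker f ⊓ LinearMap.ker g) + 2 = finrank K V := by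
  have hker : LinearMap.ker f ⊓ LinearMap.ker g = ((K ∙ f) ⊔ (K ∙ g)).dualCoannihilator := by
    rw [dualCoannihilator_sup_eq, dualCoannihilator_span_singleton,
      dualCoannihilator_span_singleton]
  have hspan : finrank K ↥((K ∙ f) ⊔ (K ∙ g)) = 2 := by
    rw [finrank_sup_span_singleton hg, finrank_span_singleton hf]
  rw [hker, ← hspan, add_comm, Subspace.finrank_add_finrank_dualCoannihilator_eq]

end Module.Dual

open Classical in
theorem Projectivization.card_rep_mem_ker_inf_ker {K V : Type*} [Field K] [Finite K]
    [AddCommGroup V] [Module K V] {m : ℕ} (hV : finrank K V = m + 2) {f : Dual K V} (hf : f ≠ 0)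
    (g : Dual K V) :
    Nat.card {p : ℙ K V // p.rep ∈ LinearMap.ker f ⊓ LinearMap.ker g} =
      ∑ i ∈ range m, Nat.card K ^ i + if g ∈ K ∙ f then Nat.card K ^ m else 0 := by
  have : FiniteDimensional K V := Module.finite_of_finrank_pos (by omega)
  rw [card_subtype_rep_mem]
  split_ifs with hg
  · have := Dual.finrank_ker_inf_ker_of_mem_span hf hg
    rw [card_of_finrank K _ (n := m + 1) (by omega), sum_range_succ]
  · have := Dual.finrank_ker_inf_ker_of_notMem_span hf hg
    rw [card_of_finrank K _ (n := m) (by omega), add_zero]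

section SemilinearIncidence

variable {F ι : Type*} [Field F] (σ : F ≃+* F)

theorem dotProduct_map_eq_zero_iff [Fintype ι] (y x : ι → F) :
    y ⬝ᵥ (fun i => σ (x i)) = 0 ↔ (fun i => σ.symm (y i)) ⬝ᵥ x = 0 := by
  have : y ⬝ᵥ (fun i => σ (x i)) = σ ((fun i => σ.symm (y i)) ⬝ᵥ x) := by
    rw [← RingEquiv.coe_toRingHom, RingHom.map_dotProduct]
    simp [Function.comp_def]
  rw [this, map_eq_zero_iff σ σ.injective]

theorem exists_eq_smul_map_iff (y u : ι → F) :
    (∃ l : F, y = l • fun i => σ (u i)) ↔ (fun i => σ.symm (y i)) ∈ F ∙ u := by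
  rw [mem_span_singleton]
  constructor
  · rintro ⟨l, rfl⟩
    exact ⟨σ.symm l, by ext; simp⟩
  · rintro ⟨a, ha⟩
    refine ⟨σ a, funext fun i => ?_⟩
    simpa using congrArg σ (congrFun ha i).symm

theorem mem_span_singleton_dotProductEquiv_iff [Fintype ι] [DecidableEq ι] (v u : ι → F) :
    dotProductEquiv F ι v ∈ F ∙ dotProductEquiv F ι u ↔ v ∈ F ∙ u := by
  simp only [mem_span_singleton, ← map_smul, (dotProductEquiv F ι).injective.eq_iff]

open Classical in
theorem card_incident_points [Finite F] [Fintype ι] [DecidableEq ι] (M : Matrix ι ι F) {m : ℕ}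
    (hι : Fintype.card ι = m + 2) (ξ : ℙ F (ι → F)) :
    Nat.card {x : ℙ F (ι → F) //
        ξ.rep ⬝ᵥ x.rep = 0 ∧ (ξ.rep ᵥ* M) ⬝ᵥ (fun i => σ (x.rep i)) = 0} =
      ∑ i ∈ range m, Nat.card F ^ i +
        if ∃ l : F, ξ.rep ᵥ* M = l • (fun i => σ (ξ.rep i)) then Nat.card F ^ m else 0 := by
  set η : ι → F := fun i => σ.symm ((ξ.rep ᵥ* M) i)
  have hf : dotProductEquiv F ι ξ.rep ≠ 0 := by simpa using ξ.rep_nonzero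
  have hV : finrank F (ι → F) = m + 2 := by simp [hι]
  have key := Projectivization.card_rep_mem_ker_inf_ker hV hf (dotProductEquiv F ι η)
  rw [mem_span_singleton_dotProductEquiv_iff, ← exists_eq_smul_map_iff] at key
  rw [← key]
  congr! 3 with x
  simp [η, dotProduct_map_eq_zero_iff]

end SemilinearIncidence

theorem Nat.geomSum_mul_geomSum {q : ℕ} (hq : 2 ≤ q) (a b : ℕ) :
    (∑ i ∈ range a, q ^ i) * (∑ i ∈ range b, q ^ i) = (q ^ a - 1) * (q ^ b - 1) / (q - 1) ^ 2 := by
  have hdvd (k : ℕ) : q - 1 ∣ q ^ k - 1 := by simpa using Nat.sub_dvd_pow_sub_pow q 1 k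
  rw [geomSum_eq hq, geomSum_eq hq, Nat.div_mul_div_comm (hdvd a) (hdvd b), sq]

theorem stmt_2 (F : Type) [Field F] [Fintype F] (n : ℕ) (hn : 2 ≤ n)
    (σ : F ≃+* F) (M : Matrix (Fin (n + 1)) (Fin (n + 1)) F) :
    Nat.card {pq : Projectivization F (Fin (n + 1) → F) × Projectivization F (Fin (n + 1) → F) //
        pq.2.rep ⬝ᵥ pq.1.rep = 0 ∧ (pq.2.rep ᵥ* M) ⬝ᵥ (fun i => σ (pq.1.rep i)) = 0} =
      ((Fintype.card F) ^ (n + 1) - 1) * ((Fintype.card F) ^ (n - 1) - 1)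
          / ((Fintype.card F) - 1) ^ 2
        + theta σ M * (Fintype.card F) ^ (n - 1) := by
  classical
  have := Fintype.ofFinite (ℙ F (Fin (n + 1) → F))
  have hι : Fintype.card (Fin (n + 1)) = n - 1 + 2 := by simp; omega
  rw [← Nat.card_eq_fintype_card]
  calc _ = ∑ ξ : ℙ F (Fin (n + 1) → F), Nat.card {x : ℙ F (Fin (n + 1) → F) //
          ξ.rep ⬝ᵥ x.rep = 0 ∧ (ξ.rep ᵥ* M) ⬝ᵥ (fun i => σ (x.rep i)) = 0} :=
        Nat.card_subtype_prod_eq_sum _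
    _ = ∑ ξ : ℙ F (Fin (n + 1) → F), (∑ i ∈ range (n - 1), Nat.card F ^ i +
          if ∃ l : F, ξ.rep ᵥ* M = l • (fun i => σ (ξ.rep i)) then Nat.card F ^ (n - 1) else 0) :=
        sum_congr rfl fun ξ _ => by convert card_incident_points σ M hι ξ
    _ = Nat.card (ℙ F (Fin (n + 1) → F)) * ∑ i ∈ range (n - 1), Nat.card F ^ i +
          theta σ M * Nat.card F ^ (n - 1) := by
      rw [sum_add_distrib, sum_const, sum_ite, sum_const_zero, add_zero, sum_const, card_univ,
        ← Fintype.card_subtype, ← Nat.card_eq_fintype_card, ← Nat.card_eq_fintype_card,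
        smul_eq_mul, smul_eq_mul, theta]
    _ = _ := by
      rw [Projectivization.card_of_finrank F _ (n := n + 1) (by simp),
        Nat.geomSum_mul_geomSum Finite.one_lt_card]
end

section
/- For every (n+1)×(n+1) matrix M over F_q and every field automorphism σ of F_q, the weight of the codeword c_M satisfies wt(c_M) = q^{n−1}·(q^{n+1}−1)/(q−1) − q^{n−1}·θ_M. In particular the spectrum of weights of C(Λ_σ) is { q^{n−1}(q^{n+1}−1)/(q−1) − q^{n−1}θ_M : M an (n+1)×(n+1) matrix over F_q }. -/
open Matrix

/-- `wt σ M` : the Hamming weight of the codeword `c_M` of `C(Λ_σ)`, i.e. the number of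
pairs of projective points `([x],[ξ])` with `ξ·x = 0` and `ξ·M·x^σ ≠ 0`. -/
noncomputable def wt {F : Type} [Field F] [Fintype F] {n : ℕ}
    (σ : F ≃+* F) (M : Matrix (Fin (n + 1)) (Fin (n + 1)) F) : ℕ :=
  Nat.card {pq : Projectivization F (Fin (n + 1) → F) × Projectivization F (Fin (n + 1) → F) //
    pq.2.rep ⬝ᵥ pq.1.rep = 0 ∧ (pq.2.rep ᵥ* M) ⬝ᵥ (fun i => σ (pq.1.rep i)) ≠ 0}

/-!
Count the pairs `([x],[ξ])` fibrewise over `[ξ]`. Writing `η := σ⁻¹(ξ·M)`, the condition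
`ξ·M·x^σ ≠ 0` becomes the linear condition `η·x ≠ 0`, and `ξ·M = λ·ξ^σ` becomes `η ∈ F·ξ`.
So the fibre over `[ξ]` is empty when `[ξ]` is counted by `θ_M`, and otherwise consists of the
points of the hyperplane `ξ = 0` off the distinct hyperplane `η = 0`: these are the
`q^n - q^{n-1}` vectors of `ξ^⊥ ∖ η^⊥` up to the `q - 1` scalars, i.e. `q^{n-1}` points.
Summing, `wt(c_M) = q^{n-1}(|PG(n,q)| - θ_M)`.
-/

open Module Submodule
open scoped LinearAlgebra.Projectivization

theorem Nat.card_subtype_add_card_subtype_not {α : Type*} [Finite α] (p : α → Prop) :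
    Nat.card {x // p x} + Nat.card {x // ¬ p x} = Nat.card α := by
  classical
  rw [← Nat.card_sum, Nat.card_congr (Equiv.sumCompl p)]

namespace Projectivization

variable {K V : Type*} [DivisionRing K] [AddCommGroup V] [Module K V]

theorem natCard_subtype_rep_mul (C : V → Prop) (hC : ∀ (a : Kˣ) (v : V), C (a • v) ↔ C v) :
    Nat.card {p : ℙ K V // C p.rep} * (Nat.card K - 1) = Nat.card {v : V // v ≠ 0 ∧ C v} := by
  have hrep (v : {v : V // v ≠ 0}) : C v ↔ C (mk K v.1 v.2).rep := by
    obtain ⟨a, ha⟩ := exists_smul_eq_mk_rep K v.1 v.2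
    rw [← ha, hC]
  rw [← Nat.card_units, ← Nat.card_prod]
  exact (Nat.card_congr <| (Equiv.subtypeSubtypeEquivSubtypeInter (· ≠ 0) C).symm.trans <|
    ((nonZeroEquivProjectivizationProdUnits K V).subtypeEquiv hrep).trans
    Equiv.prodSubtypeFstEquivSubtypeProd).symm

end Projectivization

namespace Module.Dual

variable {F W : Type*} [Field F] [Finite F] [AddCommGroup W] [Module F W] [FiniteDimensional F W]

theorem natCard_apply_ne_zero {g : Dual F W} (hg : g ≠ 0) :
    Nat.card {x : W // g x ≠ 0} = Nat.card F ^ (finrank F W - 1) * (Nat.card F - 1) := by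
  have := Module.finite_of_finite F (M := W)
  have hsplit : Nat.card (LinearMap.ker g) + Nat.card {x : W // g x ≠ 0} = Nat.card W :=
    Nat.card_subtype_add_card_subtype_not (g · = 0)
  rw [natCard_eq_pow_finrank (K := F) (V := W),
    natCard_eq_pow_finrank (K := F) (V := LinearMap.ker g), ← finrank_ker_add_one_of_ne_zero hg,
    pow_succ] at hsplit
  rw [← finrank_ker_add_one_of_ne_zero hg, Nat.add_sub_cancel, Nat.mul_sub_one]
  omega

theorem natCard_ker_inf_apply_ne_zero {f g : Dual F W} (hf : f ≠ 0) (hg : g ∉ span F {f}) :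
    Nat.card {x : W // f x = 0 ∧ g x ≠ 0} = Nat.card F ^ (finrank F W - 2) * (Nat.card F - 1) := by
  have hrestrict : g ∘ₗ (LinearMap.ker f).subtype ≠ 0 := by
    refine fun h => hg ?_
    have : ⨅ _ : Unit, LinearMap.ker f ≤ LinearMap.ker g := by
      rw [iInf_const]
      exact fun x hx => LinearMap.congr_fun h ⟨x, hx⟩
    simpa using mem_span_of_iInf_ker_le_ker this
  refine (Nat.card_congr
    (Equiv.subtypeSubtypeEquivSubtypeInter (· ∈ LinearMap.ker f) (g · ≠ 0))).symm.trans ?_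
  rw [← finrank_ker_add_one_of_ne_zero hf]
  exact natCard_apply_ne_zero hrestrict

theorem natCard_projectivization_ker_inf_apply_ne_zero {f g : Dual F W} (hf : f ≠ 0)
    (hg : g ∉ span F {f}) :
    Nat.card {p : ℙ F W // f p.rep = 0 ∧ g p.rep ≠ 0} = Nat.card F ^ (finrank F W - 2) := by
  have hq : 0 < Nat.card F - 1 := Nat.sub_pos_of_lt Finite.one_lt_card
  refine Nat.eq_of_mul_eq_mul_right hq ?_
  rw [Projectivization.natCard_subtype_rep_mul (fun x => f x = 0 ∧ g x ≠ 0)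
    fun a x => by simp [Units.smul_def], ← natCard_ker_inf_apply_ne_zero hf hg]
  refine Nat.card_congr (Equiv.subtypeEquivRight fun x => ⟨fun h => h.2, fun h => ⟨?_, h⟩⟩)
  rintro rfl
  exact h.2 (map_zero g)

end Module.Dual

section TwistedDotProduct

variable {F m : Type*} [Field F] (σ : F ≃+* F)

theorem dotProduct_map_ringEquiv_eq [Fintype m] (v x : m → F) :
    v ⬝ᵥ (fun i => σ (x i)) = σ ((fun i => σ.symm (v i)) ⬝ᵥ x) := by
  simp [dotProduct, map_sum]

theorem exists_eq_smul_map_ringEquiv_iff (v ξ : m → F) :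
    (∃ l : F, v = l • fun i => σ (ξ i)) ↔ (fun i => σ.symm (v i)) ∈ span F {ξ} := by
  rw [mem_span_singleton]
  constructor
  · rintro ⟨l, rfl⟩
    exact ⟨σ.symm l, by ext; simp⟩
  · rintro ⟨a, ha⟩
    refine ⟨σ a, funext fun i => ?_⟩
    simpa using congrArg σ (congrFun ha i).symm

end TwistedDotProduct

section TwistedFiber

variable {F m : Type*} [Field F] [Fintype m] (σ : F ≃+* F) (M : Matrix m m F)

theorem natCard_projectivization_twisted_fiber_of_exists {ξ : m → F}
    (hξ : ∃ l : F, ξ ᵥ* M = l • (fun i => σ (ξ i))) :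
    Nat.card {p : ℙ F (m → F) // ξ ⬝ᵥ p.rep = 0 ∧ (ξ ᵥ* M) ⬝ᵥ (fun i => σ (p.rep i)) ≠ 0} = 0 := by
  obtain ⟨c, hc⟩ := mem_span_singleton.mp ((exists_eq_smul_map_ringEquiv_iff σ _ ξ).mp hξ)
  refine Nat.card_eq_zero.mpr (Or.inl ⟨fun p => p.2.2 ?_⟩)
  rw [dotProduct_map_ringEquiv_eq, ← hc, smul_dotProduct, p.2.1, smul_zero, map_zero]

theorem natCard_projectivization_twisted_fiber_of_not_exists [Finite F] [DecidableEq m]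
    {ξ : m → F} (hξ₀ : ξ ≠ 0) (hξ : ¬ ∃ l : F, ξ ᵥ* M = l • (fun i => σ (ξ i))) :
    Nat.card {p : ℙ F (m → F) // ξ ⬝ᵥ p.rep = 0 ∧ (ξ ᵥ* M) ⬝ᵥ (fun i => σ (p.rep i)) ≠ 0} =
      Nat.card F ^ (Fintype.card m - 2) := by
  let e := dotProductEquiv F m
  rw [exists_eq_smul_map_ringEquiv_iff, ← apply_mem_span_image_iff_mem_span e.injective,
    Set.image_singleton] at hξ
  simp_rw [dotProduct_map_ringEquiv_eq σ (ξ ᵥ* M), map_ne_zero]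
  rw [← finrank_fintype_fun_eq_card F]
  exact Dual.natCard_projectivization_ker_inf_apply_ne_zero (f := e ξ) (by simpa using hξ₀) hξ

end TwistedFiber

theorem wt_eq_sum {F : Type} [Field F] [Fintype F] {n : ℕ} [Fintype (ℙ F (Fin (n + 1) → F))]
    (σ : F ≃+* F) (M : Matrix (Fin (n + 1)) (Fin (n + 1)) F) :
    wt σ M = ∑ ξ : ℙ F (Fin (n + 1) → F), Nat.card {p : ℙ F (Fin (n + 1) → F) //
      ξ.rep ⬝ᵥ p.rep = 0 ∧ (ξ.rep ᵥ* M) ⬝ᵥ (fun i => σ (p.rep i)) ≠ 0} := by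
  rw [wt, ← Nat.card_sigma]
  exact Nat.card_congr <| ((Equiv.prodComm _ _).subtypeEquiv fun _ => Iff.rfl).trans <|
    Equiv.subtypeProdEquivSigmaSubtype fun ξ p : ℙ F (Fin (n + 1) → F) => ξ.rep ⬝ᵥ p.rep = 0 ∧
      (ξ.rep ᵥ* M) ⬝ᵥ (fun i => σ (p.rep i)) ≠ 0

theorem stmt_3_general (F : Type) [Field F] [Fintype F] (n : ℕ)
    (σ : F ≃+* F) (M : Matrix (Fin (n + 1)) (Fin (n + 1)) F) :
    wt σ M = (Fintype.card F) ^ (n - 1) * (((Fintype.card F) ^ (n + 1) - 1) / ((Fintype.card F) - 1))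
        - (Fintype.card F) ^ (n - 1) * theta σ M := by
  classical
  let _ := Fintype.ofFinite (ℙ F (Fin (n + 1) → F))
  set Θ := fun ξ : ℙ F (Fin (n + 1) → F) => ∃ l : F, ξ.rep ᵥ* M = l • (fun i => σ (ξ.rep i))
  have hwt : wt σ M = Nat.card {ξ // ¬ Θ ξ} * Nat.card F ^ (n - 1) := by
    rw [wt_eq_sum, ← Finset.sum_filter_add_sum_filter_not _ Θ,
      Finset.sum_eq_zero fun ξ hξ => natCard_projectivization_twisted_fiber_of_exists σ M
        (Finset.mem_filter.mp hξ).2,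
      Finset.sum_congr rfl fun ξ hξ => natCard_projectivization_twisted_fiber_of_not_exists σ M
        ξ.rep_nonzero (Finset.mem_filter.mp hξ).2,
      zero_add, Finset.sum_const, smul_eq_mul, ← Fintype.card_subtype, ← Nat.card_eq_fintype_card,
      Fintype.card_fin]
    rfl
  have hsplit := Nat.card_subtype_add_card_subtype_not Θ
  rw [Projectivization.card'', Nat.card_fun, Nat.card_fin] at hsplit
  rw [← Nat.card_eq_fintype_card, hwt, theta, ← hsplit, mul_add, mul_comm]
  exact (Nat.add_sub_cancel_left ..).symm

theorem stmt_3 (F : Type) [Field F] [Fintype F] (n : ℕ) (hn : 2 ≤ n)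
    (σ : F ≃+* F) (M : Matrix (Fin (n + 1)) (Fin (n + 1)) F) :
    wt σ M = (Fintype.card F) ^ (n - 1) * (((Fintype.card F) ^ (n + 1) - 1) / ((Fintype.card F) - 1))
        - (Fintype.card F) ^ (n - 1) * theta σ M :=
  stmt_3_general F n σ M
end

section
/- Let σ be a field automorphism of F_q with σ ≠ id and let s be the order of the fixed subfield of σ. Then the number of projective points [ξ] of PG(n,q) (ξ a nonzero row vector in F_q^{n+1}) such that ξ^σ = λ·ξ for some λ ∈ F_q equals (s^{n+1}−1)/(s−1). -/
open Matrix

lemma card_subtype_ne_aux {α : Type*} [Finite α] (a : α) :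
    Nat.card {x : α // x ≠ a} = Nat.card α - 1 := by
  classical
  have : Fintype α := Fintype.ofFinite α
  rw [Nat.card_eq_fintype_card, Nat.card_eq_fintype_card]
  have : Fintype.card {x : α // ¬ x = a} = Fintype.card α - Fintype.card {x : α // x = a} :=
    Fintype.card_subtype_compl _
  simpa [Fintype.card_subtype_eq] using this

theorem stmt_4 (F : Type) [Field F] [Fintype F] (n : ℕ) (hn : 2 ≤ n)
    (σ : F ≃+* F) (hσ : σ ≠ RingEquiv.refl F)
    (s : ℕ) (hs : s = Nat.card {a : F // σ a = a}) :
    Nat.card {ξ : Projectivization F (Fin (n + 1) → F) //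
        ∃ l : F, (fun i => σ (ξ.rep i)) = l • ξ.rep} =
      (s ^ (n + 1) - 1) / (s - 1) := by
  classical
  set Kt := {a : F // σ a = a} with hKt
  set T := {ξ : Projectivization F (Fin (n + 1) → F) //
      ∃ l : F, (fun i => σ (ξ.rep i)) = l • ξ.rep} with hT
  set S := {v : Fin (n + 1) → F // (∀ i, σ (v i) = v i) ∧ v ≠ 0} with hS
  set Ks := {c : F // σ c = c ∧ c ≠ 0} with hKs
  -- Claim B : mk of any σ-fixed nonzero vector lies in the defining set of T
  have claimB : ∀ v : S, ∃ l : F,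
      (fun i => σ ((Projectivization.mk F v.1 v.2.2).rep i))
        = l • (Projectivization.mk F v.1 v.2.2).rep := by
    intro v
    have h1 : Projectivization.mk F (Projectivization.mk F v.1 v.2.2).rep
        (Projectivization.rep_nonzero _) = Projectivization.mk F v.1 v.2.2 :=
      Projectivization.mk_rep _
    rw [Projectivization.mk_eq_mk_iff] at h1
    obtain ⟨a, ha⟩ := h1
    have hane : (a : F) ≠ 0 := a.ne_zero
    refine ⟨σ a * (a : F)⁻¹, funext fun i => ?_⟩
    have hrep : (Projectivization.mk F v.1 v.2.2).rep i = (a : F) * v.1 i := by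
      rw [← ha]; rfl
    simp only [Pi.smul_apply, smul_eq_mul]
    rw [hrep, _root_.map_mul, v.2.1 i]
    field_simp
  -- Claim A : every point of T has a σ-fixed representative
  have claimA : ∀ ξ : T, ∃ v : S, Projectivization.mk F v.1 v.2.2 = ξ.1 := by
    rintro ⟨ξ, l, hl⟩
    have hrep := ξ.rep_nonzero
    obtain ⟨i0, hi0⟩ : ∃ i, ξ.rep i ≠ 0 := by
      by_contra h
      push_neg at h
      exact hrep (funext h)
    have hl' : ∀ i, σ (ξ.rep i) = l * ξ.rep i := fun i => congrFun hl i
    have hlne : l ≠ 0 := by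
      intro h
      apply hi0
      have h2 := hl' i0
      rw [h, zero_mul] at h2
      exact σ.injective (h2.trans (map_zero σ).symm)
    set v : Fin (n + 1) → F := (ξ.rep i0)⁻¹ • ξ.rep with hv
    have hfix : ∀ i, σ (v i) = v i := by
      intro i
      show σ ((ξ.rep i0)⁻¹ * ξ.rep i) = (ξ.rep i0)⁻¹ * ξ.rep i
      rw [_root_.map_mul, map_inv₀, hl' i, hl' i0, mul_inv]
      field_simp
    have hv1 : v i0 = 1 := by
      show (ξ.rep i0)⁻¹ * ξ.rep i0 = 1
      exact inv_mul_cancel₀ hi0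
    have hvne : v ≠ 0 := by
      intro h
      rw [h] at hv1
      simp at hv1
    refine ⟨⟨v, hfix, hvne⟩, ?_⟩
    have : Projectivization.mk F v hvne = Projectivization.mk F ξ.rep hrep := by
      rw [Projectivization.mk_eq_mk_iff]
      exact ⟨Units.mk0 (ξ.rep i0)⁻¹ (inv_ne_zero hi0), rfl⟩
    rw [this, Projectivization.mk_rep]
  -- choose representatives
  choose v0 hv0 using claimA
  -- the bijection T × Ks ≃ S
  have key : Nat.card (T × Ks) = Nat.card S := by
    apply Nat.card_eq_of_bijective
      (f := fun p : T × Ks => (⟨p.2.1 • (v0 p.1).1,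
        fun i => by simp [_root_.map_mul, p.2.2.1, (v0 p.1).2.1 i],
        smul_ne_zero p.2.2.2 (v0 p.1).2.2⟩ : S))
    constructor
    · rintro ⟨ξ, c⟩ ⟨ξ', c'⟩ hpair
      have hval : c.1 • (v0 ξ).1 = c'.1 • (v0 ξ').1 := congrArg Subtype.val hpair
      have hmk : ∀ (η : T) (d : Ks), Projectivization.mk F (d.1 • (v0 η).1)
          (smul_ne_zero d.2.2 (v0 η).2.2) = η.1 := by
        intro η d
        rw [← hv0 η, Projectivization.mk_eq_mk_iff]
        exact ⟨Units.mk0 d.1 d.2.2, rfl⟩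
      have hξ : ξ = ξ' := by
        apply Subtype.ext
        rw [← hmk ξ c, ← hmk ξ' c']
        congr 1
      subst hξ
      obtain ⟨i, hi⟩ : ∃ i, (v0 ξ).1 i ≠ 0 := by
        by_contra h
        push_neg at h
        exact (v0 ξ).2.2 (funext h)
      have h1 : c.1 * (v0 ξ).1 i = c'.1 * (v0 ξ).1 i := congrFun hval i
      have h2 : c.1 = c'.1 := mul_right_cancel₀ hi h1
      exact Prod.ext (rfl) (Subtype.ext h2)
    · intro v
      set ξ : T := ⟨Projectivization.mk F v.1 v.2.2, claimB v⟩ with hξ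
      have h1 : Projectivization.mk F v.1 v.2.2 = Projectivization.mk F (v0 ξ).1 (v0 ξ).2.2 :=
        (hv0 ξ).symm
      rw [Projectivization.mk_eq_mk_iff'] at h1
      obtain ⟨a, ha⟩ := h1
      obtain ⟨i, hi⟩ : ∃ i, (v0 ξ).1 i ≠ 0 := by
        by_contra h
        push_neg at h
        exact (v0 ξ).2.2 (funext h)
      have hai : a * (v0 ξ).1 i = v.1 i := congrFun ha i
      have hane : a ≠ 0 := by
        intro h
        rw [h, zero_smul] at ha
        exact v.2.2 ha.symm
      have haf : σ a = a := by
        have h2 : σ (v.1 i) = v.1 i := v.2.1 i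
        have h3 : σ ((v0 ξ).1 i) = (v0 ξ).1 i := (v0 ξ).2.1 i
        rw [← hai, _root_.map_mul, h3] at h2
        exact mul_right_cancel₀ hi h2
      exact ⟨⟨ξ, ⟨a, haf, hane⟩⟩, Subtype.ext ha⟩
  -- cardinality of Ks
  have hKsCard : Nat.card Ks = s - 1 := by
    have e : Ks ≃ {x : Kt // x ≠ (⟨0, map_zero σ⟩ : Kt)} :=
      { toFun := fun c => ⟨⟨c.1, c.2.1⟩, fun h => c.2.2 (congrArg Subtype.val h)⟩
        invFun := fun x => ⟨x.1.1, x.1.2, fun h => x.2 (Subtype.ext h)⟩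
        left_inv := fun c => rfl
        right_inv := fun x => rfl }
    rw [Nat.card_congr e, card_subtype_ne_aux, hs]
  -- cardinality of S
  have hSCard : Nat.card S = s ^ (n + 1) - 1 := by
    have e : S ≃ {w : Fin (n + 1) → Kt // w ≠ fun _ => (⟨0, map_zero σ⟩ : Kt)} :=
      { toFun := fun v => ⟨fun i => ⟨v.1 i, v.2.1 i⟩, fun h =>
          v.2.2 (funext fun i => congrArg Subtype.val (congrFun h i))⟩
        invFun := fun w => ⟨fun i => (w.1 i).1, fun i => (w.1 i).2, fun h =>
          w.2 (funext fun i => Subtype.ext (congrFun h i))⟩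
        left_inv := fun v => rfl
        right_inv := fun w => Subtype.ext (funext fun i => rfl) }
    rw [Nat.card_congr e, card_subtype_ne_aux, Nat.card_fun, hs,
      Nat.card_eq_fintype_card (α := Fin (n + 1)), Fintype.card_fin]
  -- s ≥ 2
  have hs2 : 2 ≤ s := by
    rw [hs, Nat.succ_le_iff, Finite.one_lt_card_iff_nontrivial]
    exact ⟨⟨0, map_zero σ⟩, ⟨1, map_one σ⟩, fun h =>
      (zero_ne_one (α := F)) (congrArg Subtype.val h)⟩
  -- final arithmetic
  rw [Nat.card_prod, hSCard, hKsCard] at key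
  exact (Nat.div_eq_of_eq_mul_left (by omega) key.symm).symm
end

section
/- Let σ be a field automorphism of F_q with σ ≠ id and let M be an invertible (n+1)×(n+1) matrix over F_q. If W is a linear subspace of the space of row vectors F_q^{n+1} such that every nonzero ξ ∈ W satisfies ξ·M = λ·ξ^σ for some nonzero λ ∈ F_q, then dim W ≤ 1. -/
/-!
Call `ξ` a twisted eigenvector if `ξ M = l ξ^σ` with `l ≠ 0`.
Suppose `ξ, η ∈ W` are linearly independent, with `ξ M = a ξ^σ` and `η M = b η^σ`. For every `c` the
vector `ξ + c η` also lies in `W`, say `(ξ + c η) M = d (ξ + c η)^σ`. Expanding,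
`a ξ^σ + c b η^σ = d ξ^σ + d σ(c) η^σ`, and `ξ^σ, η^σ` are again independent, so `a = d` and
`c b = a σ(c)`. Taking `c = 1` gives `b = a`, hence `a c = a σ(c)` for every `c`, and `a ≠ 0` forces
`σ = id`.
-/

open Module Matrix

section TwistedEigenvectors

variable {K V V' : Type*} [Field K] [AddCommGroup V] [Module K V] [AddCommGroup V'] [Module K V']

theorem LinearIndependent.map_semilinear {ι : Type*} {v : ι → V} (hv : LinearIndependent K v)
    {σ : K ≃+* K} (φ : V →ₛₗ[(σ : K →+* K)] V') (hφ : Function.Injective φ) :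
    LinearIndependent K (φ ∘ v) :=
  hv.map_of_surjective_injectiveₛ σ φ.toAddMonoidHom σ.surjective hφ φ.map_smulₛₗ

theorem eq_and_mul_eq_of_twisted_eigen_add {σ : K →+* K} (T : V →ₗ[K] V')
    (φ : V →ₛₗ[σ] V') {ξ η : V} (hind : LinearIndependent K ![φ ξ, φ η]) {a b c d : K}
    (hξ : T ξ = a • φ ξ) (hη : T η = b • φ η) (hsum : T (ξ + c • η) = d • φ (ξ + c • η)) :
    a = d ∧ c * b = d * σ c := by
  refine hind.eq_of_pair ?_
  calc a • φ ξ + (c * b) • φ η = T (ξ + c • η) := by simp [hξ, hη, mul_smul]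
    _ = d • φ ξ + (d * σ c) • φ η := by simp [hsum, smul_add, mul_smul]

theorem RingEquiv.eq_refl_of_linearIndependent_twisted_eigen {σ : K ≃+* K} (T : V →ₗ[K] V')
    (φ : V →ₛₗ[(σ : K →+* K)] V') (hφ : Function.Injective φ) (W : Submodule K V)
    (hW : ∀ ξ ∈ W, ξ ≠ 0 → ∃ l : K, l ≠ 0 ∧ T ξ = l • φ ξ) {ξ η : V} (hξW : ξ ∈ W)
    (hηW : η ∈ W) (hind : LinearIndependent K ![ξ, η]) : σ = RingEquiv.refl K := by
  have hind' : LinearIndependent K ![φ ξ, φ η] := by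
    have := hind.map_semilinear φ hφ
    rw [← FinVec.map_eq] at this
    exact this
  obtain ⟨a, ha, hξ⟩ := hW ξ hξW (hind.ne_zero 0)
  obtain ⟨b, -, hη⟩ := hW η hηW (by simpa using hind.ne_zero 1)
  have key : ∀ c : K, c * b = a * σ c := fun c => by
    have hne : ξ + c • η ≠ 0 := fun h0 =>
      one_ne_zero (LinearIndependent.pair_iff.mp hind 1 c (by rwa [one_smul])).1
    obtain ⟨d, -, hsum⟩ := hW _ (W.add_mem hξW (W.smul_mem c hηW)) hne
    obtain ⟨rfl, h⟩ := eq_and_mul_eq_of_twisted_eigen_add T φ hind' hξ hη hsum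
    exact h
  have hba : b = a := by simpa using key 1
  ext c
  have : a * σ c = a * c := by rw [← key c, hba, mul_comm]
  exact mul_left_cancel₀ ha this

theorem Submodule.finrank_le_one_of_forall_twisted_eigen {σ : K ≃+* K}
    (hσ : σ ≠ RingEquiv.refl K) (T : V →ₗ[K] V') (φ : V →ₛₗ[(σ : K →+* K)] V')
    (hφ : Function.Injective φ) (W : Submodule K V)
    (hW : ∀ ξ ∈ W, ξ ≠ 0 → ∃ l : K, l ≠ 0 ∧ T ξ = l • φ ξ) : finrank K W ≤ 1 := by
  by_contra! h
  obtain ⟨f, hf⟩ := exists_linearIndependent_of_le_finrank (R := K) (M := W) h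
  have hind : LinearIndependent K ![(f 0 : V), f 1] := by
    have hvec : W.subtype ∘ f = ![(f 0 : V), f 1] := by
      ext i
      fin_cases i <;> rfl
    exact hvec ▸ hf.map' W.subtype W.ker_subtype
  exact hσ (σ.eq_refl_of_linearIndependent_twisted_eigen T φ hφ W hW (f 0).2 (f 1).2 hind)

end TwistedEigenvectors

def RingEquiv.piSemilinear {K : Type*} [Semiring K] (σ : K ≃+* K) (ι : Type*) :
    (ι → K) →ₛₗ[(σ : K →+* K)] (ι → K) where
  toFun ξ i := σ (ξ i)
  map_add' _ _ := funext fun _ => map_add σ _ _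
  map_smul' _ _ := funext fun _ => map_mul σ _ _

theorem stmt_5_general (F : Type) [Field F] (n : ℕ)
    (σ : F ≃+* F) (hσ : σ ≠ RingEquiv.refl F)
    (M : Matrix (Fin (n + 1)) (Fin (n + 1)) F)
    (W : Submodule F (Fin (n + 1) → F))
    (hW : ∀ ξ ∈ W, ξ ≠ 0 → ∃ l : F, l ≠ 0 ∧ ξ ᵥ* M = l • (fun i => σ (ξ i))) :
    Module.finrank F W ≤ 1 :=
  W.finrank_le_one_of_forall_twisted_eigen hσ M.vecMulLinear (σ.piSemilinear _)
    (fun _ _ h => funext fun i => σ.injective (congrFun h i)) hW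

theorem stmt_5 (F : Type) [Field F] [Fintype F] (n : ℕ) (hn : 2 ≤ n)
    (σ : F ≃+* F) (hσ : σ ≠ RingEquiv.refl F)
    (M : Matrix (Fin (n + 1)) (Fin (n + 1)) F) (hM : IsUnit M)
    (W : Submodule F (Fin (n + 1) → F))
    (hW : ∀ ξ ∈ W, ξ ≠ 0 → ∃ l : F, l ≠ 0 ∧ ξ ᵥ* M = l • (fun i => σ (ξ i))) :
    Module.finrank F W ≤ 1 :=
  stmt_5_general F n σ hσ M W hW
end

section
/- Let σ be a field automorphism of F_q with σ ≠ id, let s be the order of the fixed subfield of σ, and let M be an invertible (n+1)×(n+1) matrix over F_q. If W is an r-dimensional linear subspace of the space of row vectors F_q^{n+1}, then the number of projective points [ξ] with ξ ∈ W nonzero such that ξ·M = λ·ξ^σ for some nonzero λ ∈ F_q is at most (s^r−1)/(s−1). -/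
open Matrix Module Submodule

open scoped LinearAlgebra.Projectivization

/-!
Rescaling a solution `ξ` of `ξ M = l ξ^σ` by `c` replaces `l` by `l c / σ c`. After fixing one
representative `l` in each class of `Fˣ` modulo `{c / σ c}`, every projective solution point is
therefore represented in one of the spaces `E_l = {ξ ∈ W | ξ M = l ξ^σ}`, which are vector spaces
over the fixed field `K` of `σ`. Bases of all the `E_l` over `K` together stay linearly independent
over `F`: a minimal relation, pushed through `M` and `σ⁻¹`, yields a shorter one unless its
coefficients are `K`-multiples of each other supported on one `E_l`. So the `K`-span `U` of the
`E_l` has `dim_K U ≤ dim_F W = r`, and the solution points inject into `ℙ_K(U)`, which has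
`(s ^ dim_K U - 1) / (s - 1)` points.
-/

theorem Projectivization.card_le_of_forall_exists_smul_mem {K F V : Type*} [Field K] [Field F]
    [Algebra K F] [AddCommGroup V] [Module F V] [Module K V] [IsScalarTower K F V]
    (U : Submodule K V) [Finite U] {S : Set (ℙ F V)}
    (hS : ∀ x ∈ S, ∃ c : F, c ≠ 0 ∧ c • x.rep ∈ U) : Nat.card S ≤ Nat.card (ℙ K U) := by
  let f : U →ₛₗ[algebraMap K F] V :=
    { toFun := (↑)
      map_add' := fun _ _ => rfl
      map_smul' := fun a u => (algebraMap_smul F a (u : V)).symm }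
  have hsub : S ⊆ Set.range (Projectivization.map f Subtype.val_injective) := by
    intro x hx
    obtain ⟨c, hc, hmem⟩ := hS x hx
    have h0 : (⟨c • x.rep, hmem⟩ : U) ≠ 0 := by
      simpa [← Subtype.coe_ne_coe] using smul_ne_zero hc x.rep_nonzero
    refine ⟨Projectivization.mk K _ h0, ?_⟩
    rw [Projectivization.map_mk]
    conv_rhs => rw [← x.mk_rep]
    exact (Projectivization.mk_eq_mk_iff F _ _ _ _).2 ⟨Units.mk0 c hc, rfl⟩
  calc Nat.card S ≤ Nat.card (Set.range _) := Nat.card_mono (Set.toFinite _) hsub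
    _ ≤ _ := Finite.card_range_le _

section SemiEigen

variable {F : Type*} [Field F] (σ : F ≃+* F)

abbrev fixedSubfield : Subfield F := (σ : F →+* F).eqLocusField (RingHom.id F)

theorem mem_fixedSubfield {a : F} : a ∈ fixedSubfield σ ↔ σ a = a := Iff.rfl

/-- Rescaling a semi-eigenvector by `c` multiplies its semi-eigenvalue by `c / σ c`. -/
def rescalingSubgroup : Subgroup Fˣ := (MonoidHom.id Fˣ / Units.map (σ : F →* F)).range

variable {σ} in
theorem mk_eq_mk_of_mul_eq {a b : Fˣ} {c : F} (hc : c ≠ 0) (h : (a : F) * c = b * σ c) :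
    (a : Fˣ ⧸ rescalingSubgroup σ) = b := by
  rw [QuotientGroup.eq]
  refine ⟨Units.mk0 c hc, Units.ext ?_⟩
  have hσc : σ c ≠ 0 := by simpa using hc
  simp [MonoidHom.div_apply]
  field_simp
  linear_combination h

variable {σ} in
/-- The identity `l i * c i = l i₀ * σ (c i)` forces the nonzero `c i` to be fixed by `σ` and to
sit at indices of the class of `l i₀`, so `c` is a relation over the fixed field there. -/
theorem eq_zero_of_mul_eq_mul_apply {V ι : Type*} [AddCommGroup V] [Module F V] {v : ι → V}
    {l : ι → Fˣ}
    (hl : ∀ i j, (l i : Fˣ ⧸ rescalingSubgroup σ) = l j → l i = l j)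
    (hK : ∀ i, LinearIndepOn (fixedSubfield σ) v {j | l j = l i})
    {s : Finset ι} {c : ι → F} (hc : ∑ i ∈ s, c i • v i = 0) {i₀ : ι} (hi₀ : i₀ ∈ s)
    (htwist : ∀ i, l i * c i = l i₀ * σ (c i)) : c i₀ = 0 := by
  classical
  have hclass : ∀ i, c i ≠ 0 → l i = l i₀ := fun i hi =>
    hl i i₀ (mk_eq_mk_of_mul_eq hi (htwist i))
  have hfix : ∀ i, c i ∈ fixedSubfield σ := by
    intro i
    rw [mem_fixedSubfield]
    rcases eq_or_ne (c i) 0 with h | h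
    · simp [h]
    · have hi := htwist i
      rw [hclass i h] at hi
      exact (mul_left_cancel₀ (l i₀).ne_zero hi).symm
  have hc' : ∑ i ∈ s.filter (fun i => l i = l i₀), c i • v i = 0 :=
    (Finset.sum_filter_of_ne fun i _ h => hclass i (left_ne_zero_of_smul h)).trans hc
  exact congrArg Subtype.val <| linearIndepOn_iff'.1 (hK i₀) (s.filter fun i => l i = l i₀)
    (fun i => ⟨c i, hfix i⟩) (fun i hi => (Finset.mem_filter.1 hi).2) hc' i₀ (by simp [hi₀])

variable {m : Type*} [Fintype m]

def semiEigenspace (M : Matrix m m F) (l : F) : Submodule (fixedSubfield σ) (m → F) where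
  carrier := {v | v ᵥ* M = l • fun i => σ (v i)}
  add_mem' {v w} hv hw := by
    simp only [Set.mem_ofPred_eq] at *
    rw [add_vecMul, hv, hw, ← smul_add]
    simp only [Pi.add_apply, map_add]; rfl
  zero_mem' := by simp [Set.mem_ofPred_eq, ← Pi.zero_def]
  smul_mem' a v hv := by
    have ha : σ a = a := a.2
    simp only [Set.mem_ofPred_eq] at *
    change ((a : F) • v) ᵥ* M = l • fun i => σ ((a : F) * v i)
    rw [smul_vecMul, hv, smul_comm]
    simp only [map_mul, ha]; rfl

variable {σ} {M : Matrix m m F}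

theorem mem_semiEigenspace {l : F} {v : m → F} :
    v ∈ semiEigenspace σ M l ↔ v ᵥ* M = l • fun i => σ (v i) := Iff.rfl

theorem smul_mem_semiEigenspace {l : F} {v : m → F} (hv : v ∈ semiEigenspace σ M l) (c : F) :
    c • v ∈ semiEigenspace σ M (l * c / σ c) := by
  have hc : (fun i => σ ((c • v) i)) = σ c • fun i => σ (v i) := by
    funext i; simp [map_mul]
  rw [mem_semiEigenspace] at hv ⊢
  rw [smul_vecMul, hv, hc, smul_smul, smul_smul]
  rcases eq_or_ne c 0 with rfl | hc0
  · simp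
  · rw [div_mul_cancel₀ _ ((map_ne_zero σ).2 hc0), mul_comm]

theorem exists_smul_mem_semiEigenspace_out {l : Fˣ} {v : m → F}
    (hv : v ∈ semiEigenspace σ M l) :
    ∃ c : Fˣ, (c : F) • v ∈
      semiEigenspace σ M (Quotient.out (l : Fˣ ⧸ rescalingSubgroup σ) : Fˣ) := by
  obtain ⟨⟨_, c, rfl⟩, hc⟩ := QuotientGroup.mk_out_eq_mul (rescalingSubgroup σ) l
  refine ⟨c, ?_⟩
  convert smul_mem_semiEigenspace hv c using 2
  rw [hc]
  simp [MonoidHom.div_apply, mul_div_assoc]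

theorem sum_symm_mul_smul_eq_zero {ι : Type*} {s : Finset ι} {v : ι → m → F} {l c : ι → F}
    (hv : ∀ i, v i ∈ semiEigenspace σ M (l i)) (hc : ∑ i ∈ s, c i • v i = 0) :
    ∑ i ∈ s, σ.symm (l i * c i) • v i = 0 := by
  have h : ∑ i ∈ s, (l i * c i) • (fun j => σ (v i j)) = 0 := by
    rw [← zero_vecMul M, ← hc, sum_vecMul]
    refine Finset.sum_congr rfl fun i _ => ?_
    rw [smul_vecMul, hv i, smul_smul, mul_comm]
  funext j
  simpa [map_sum] using congrArg σ.symm (congrFun h j)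

theorem linearIndependent_of_mem_semiEigenspace {ι : Type*} {v : ι → m → F} {l : ι → Fˣ}
    (hv : ∀ i, v i ∈ semiEigenspace σ M (l i))
    (hl : ∀ i j, (l i : Fˣ ⧸ rescalingSubgroup σ) = l j → l i = l j)
    (hK : ∀ i, LinearIndepOn (fixedSubfield σ) v {j | l j = l i}) :
    LinearIndependent F v := by
  classical
  rw [linearIndependent_iff'']
  intro s
  induction s using Finset.strongInduction with
  | H s ih =>
  intro g hgs hg i₀
  by_contra hgi₀
  set c : ι → F := fun i => (g i₀)⁻¹ * g i
  have hcs : ∀ i ∉ s, c i = 0 := fun i hi => by simp [c, hgs i hi]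
  have hc : ∑ i ∈ s, c i • v i = 0 := by
    simp only [c, mul_smul, ← Finset.smul_sum, hg, smul_zero]
  have hci₀ : c i₀ = 1 := inv_mul_cancel₀ hgi₀
  have hi₀ : i₀ ∈ s := by_contra fun h => hgi₀ (hgs i₀ h)
  -- subtracting the twisted relation kills the `i₀` term, so minimality forces it to vanish
  have htwist : ∀ i, l i * c i = l i₀ * σ (c i) := by
    have hd := ih (s.erase i₀) (Finset.erase_ssubset hi₀)
      (fun i => σ.symm (l i * c i) - σ.symm (l i₀) * c i) ?_ ?_
    · intro i
      apply σ.symm.injective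
      simpa [sub_eq_zero] using hd i
    · intro i hi
      rcases eq_or_ne i i₀ with rfl | hne
      · simp [hci₀]
      · simp [hcs i (fun h => hi (Finset.mem_erase.2 ⟨hne, h⟩))]
    · rw [Finset.sum_erase s (by simp [hci₀])]
      simp only [sub_smul, Finset.sum_sub_distrib, mul_smul, ← Finset.smul_sum, hc,
        sum_symm_mul_smul_eq_zero hv hc, smul_zero, sub_zero]
  exact one_ne_zero (hci₀.symm.trans (eq_zero_of_mul_eq_mul_apply hl hK hc hi₀ htwist))

variable (σ M) in
noncomputable def semiEigenvectorSpan (W : Submodule F (m → F)) :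
    Submodule (fixedSubfield σ) (m → F) :=
  ⨆ μ : Fˣ ⧸ rescalingSubgroup σ,
    semiEigenspace σ M (μ.out : F) ⊓ W.restrictScalars (fixedSubfield σ)

theorem exists_smul_mem_semiEigenvectorSpan {W : Submodule F (m → F)} {v : m → F} (hW : v ∈ W)
    {l : F} (hl : l ≠ 0) (hv : v ∈ semiEigenspace σ M l) :
    ∃ c : F, c ≠ 0 ∧ c • v ∈ semiEigenvectorSpan σ M W := by
  obtain ⟨c, hc⟩ := exists_smul_mem_semiEigenspace_out (l := Units.mk0 l hl) hv
  exact ⟨c, c.ne_zero, mem_iSup_of_mem _ ⟨hc, W.smul_mem (c : F) hW⟩⟩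

variable [Finite F]

theorem finrank_semiEigenvectorSpan_le (W : Submodule F (m → F)) :
    finrank (fixedSubfield σ) (semiEigenvectorSpan σ M W) ≤ finrank F W := by
  classical
  have := Fintype.ofFinite (Fˣ ⧸ rescalingSubgroup σ)
  set E := fun μ : Fˣ ⧸ rescalingSubgroup σ =>
    semiEigenspace σ M (μ.out : F) ⊓ W.restrictScalars (fixedSubfield σ)
  let ι := Σ μ, Fin (finrank (fixedSubfield σ) (E μ))
  let b := fun μ => Module.finBasis (fixedSubfield σ) (E μ)
  let w : ι → m → F := fun i => b i.1 i.2
  have hw : LinearIndependent F w := by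
    refine linearIndependent_of_mem_semiEigenspace (l := fun i => i.1.out)
      (fun i => (b i.1 i.2).2.1) (fun i j h => ?_) (fun i => ?_)
    · rw [QuotientGroup.out_eq', QuotientGroup.out_eq'] at h
      rw [h]
    · have hclass : {j : ι | j.1.out = i.1.out} = Set.range (Sigma.mk i.1) := by
        ext ⟨μ, k⟩
        simp [Quotient.out_inj]
      rw [hclass, linearIndepOn_range_iff sigma_mk_injective]
      exact (b i.1).linearIndependent.map' (E i.1).subtype (ker_subtype _)
  calc finrank (fixedSubfield σ) (semiEigenvectorSpan σ M W)
      ≤ finrank (fixedSubfield σ) (span (fixedSubfield σ) (Set.range w)) := by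
        refine Submodule.finrank_mono (iSup_le fun μ v hv => ?_)
        refine span_mono ?_
          (apply_mem_span_image_of_mem_span (E μ).subtype ((b μ).mem_span ⟨v, hv⟩))
        rintro _ ⟨_, ⟨j, rfl⟩, rfl⟩
        exact ⟨⟨μ, j⟩, rfl⟩
    _ ≤ Fintype.card _ := finrank_range_le_card w
    _ = finrank F (span F (Set.range w)) := (finrank_span_eq_card hw).symm
    _ ≤ finrank F W :=
        Submodule.finrank_mono (span_le.2 (Set.range_subset_iff.2 fun i => (b i.1 i.2).2.2))

end SemiEigen

theorem stmt_7_general (F : Type) [Field F] [Fintype F] (n : ℕ)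
    (σ : F ≃+* F)
    (s : ℕ) (hs : s = Nat.card {a : F // σ a = a})
    (M : Matrix (Fin (n + 1)) (Fin (n + 1)) F)
    (r : ℕ) (W : Submodule F (Fin (n + 1) → F)) (hW : Module.finrank F W = r) :
    Nat.card {ξ : Projectivization F (Fin (n + 1) → F) //
        ξ.rep ∈ W ∧ ∃ l : F, l ≠ 0 ∧ ξ.rep ᵥ* M = l • (fun i => σ (ξ.rep i))} ≤
      (s ^ r - 1) / (s - 1) := by
  have hK : Nat.card (fixedSubfield σ) = s := hs ▸ rfl
  calc _ ≤ Nat.card (ℙ (fixedSubfield σ) (semiEigenvectorSpan σ M W)) := by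
        refine Projectivization.card_le_of_forall_exists_smul_mem _ ?_
        rintro ξ ⟨hξW, l, hl, hξ⟩
        exact exists_smul_mem_semiEigenvectorSpan hξW hl hξ
    _ = (s ^ finrank (fixedSubfield σ) (semiEigenvectorSpan σ M W) - 1) / (s - 1) := by
        have : Module.Finite (fixedSubfield σ) (semiEigenvectorSpan σ M W) := .of_finite
        rw [Projectivization.card'', Module.natCard_eq_pow_finrank (K := fixedSubfield σ), hK]
    _ ≤ (s ^ r - 1) / (s - 1) := by
        have : 1 < s := hK ▸ Finite.one_lt_card
        gcongr
        · omega
        · exact hW ▸ finrank_semiEigenvectorSpan_le W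

theorem stmt_7 (F : Type) [Field F] [Fintype F] (n : ℕ) (hn : 2 ≤ n)
    (σ : F ≃+* F) (hσ : σ ≠ RingEquiv.refl F)
    (s : ℕ) (hs : s = Nat.card {a : F // σ a = a})
    (M : Matrix (Fin (n + 1)) (Fin (n + 1)) F) (hM : IsUnit M)
    (r : ℕ) (W : Submodule F (Fin (n + 1) → F)) (hW : Module.finrank F W = r) :
    Nat.card {ξ : Projectivization F (Fin (n + 1) → F) //
        ξ.rep ∈ W ∧ ∃ l : F, l ≠ 0 ∧ ξ.rep ᵥ* M = l • (fun i => σ (ξ.rep i))} ≤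
      (s ^ r - 1) / (s - 1) :=
  stmt_7_general F n σ s hs M r W hW
end

section
/- Let σ be a field automorphism of F_q with σ ≠ id. The code C(Λ_σ) is minimal: for all (n+1)×(n+1) matrices M, M' over F_q, if every pair ([x],[ξ]) of projective points with ξ·x = 0 and ξ·M'·x^σ ≠ 0 also satisfies ξ·M·x^σ ≠ 0 (i.e. the support of c_{M'} is contained in the support of c_M), then there exists λ ∈ F_q with M' = λ·M. -/
/-!
Write `T x = M x^σ` and `T' x = M' x^σ`; these are `σ`-semilinear, and the hypothesis says that
`ξ (T x) = 0` forces `ξ (T' x) = 0` whenever `ξ x = 0`. By duality, `T' x ∈ span {x, T x}` for every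
point `x`, and `ξ ∘ T'` is proportional to `ξ ∘ T` on the hyperplane `ker ξ`; so on incident pairs
with `ξ (T x) ≠ 0` the ratio `ξ (T' x) / ξ (T x)` depends only on `x`, and also only on `ξ`.
Since `σ ≠ id` forces `q ≥ 4`, a count in dimension `≥ 3` shows that any two points `x` with
`T x ∉ ⟨x⟩` are linked through a third point and two such hyperplanes, so the ratio is a global
constant `l`. Then `T' - l • T` maps every vector into its own span, and a semilinear map with that
property vanishes as soon as `σ ≠ id`.
-/

open Module Submodule LinearMap

section Semilinear

variable {K V : Type*} [Field K] [AddCommGroup V] [Module K V]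

/-- Functionals `f` stand for hyperplanes `[ξ]` and vectors for points `[x]`; both conditions are
invariant under rescaling, so no projective quotient is taken. -/
def codewordSupport {σ : K →+* K} (T : V →ₛₗ[σ] V) : Set (Dual K V × V) :=
  {p | p.1 p.2 = 0 ∧ p.1 (T p.2) ≠ 0}

section Support

variable {σ : K →+* K} {T T' : V →ₛₗ[σ] V}

theorem apply_eq_zero_of_codewordSupport_subset (h : codewordSupport T' ⊆ codewordSupport T)
    {f : Dual K V} {x : V} (hx : f x = 0) (hTx : f (T x) = 0) : f (T' x) = 0 := by
  by_contra hT'x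
  exact (h (show (f, x) ∈ codewordSupport T' from ⟨hx, hT'x⟩)).2 hTx

end Support

theorem exists_dual_le_ker_apply_ne_zero {W : Submodule K V} {s t : V} (hs : s ∉ W) (ht : t ∉ W) :
    ∃ f : Dual K V, W ≤ ker f ∧ f s ≠ 0 ∧ f t ≠ 0 := by
  obtain ⟨f, hfs, hfW⟩ := W.exists_dual_map_eq_bot_of_notMem hs inferInstance
  obtain ⟨g, hgt, hgW⟩ := W.exists_dual_map_eq_bot_of_notMem ht inferInstance
  rw [← le_ker_iff_map] at hfW hgW
  by_cases hft : f t = 0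
  · by_cases hgs : g s = 0
    · refine ⟨f + g, fun w hw => ?_, ?_, ?_⟩
      · simp [mem_ker.mp (hfW hw), mem_ker.mp (hgW hw)]
      · simpa [hgs] using hfs
      · simpa [hft] using hgt
    · exact ⟨g, hgW, hgs, hgt⟩
  · exact ⟨f, hfW, hfs, hft⟩

theorem mem_span_pair_of_codewordSupport_subset {σ : K →+* K} {T T' : V →ₛₗ[σ] V}
    (h : codewordSupport T' ⊆ codewordSupport T) (x : V) : T' x ∈ span K {x, T x} := by
  by_contra hx
  obtain ⟨f, hf, hfx, -⟩ := exists_dual_le_ker_apply_ne_zero hx hx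
  exact hfx <| apply_eq_zero_of_codewordSupport_subset h
    (hf (subset_span (by simp))) (hf (subset_span (by simp)))

theorem exists_ratio_at_point {σ : K →+* K} {T T' : V →ₛₗ[σ] V}
    (h : codewordSupport T' ⊆ codewordSupport T) (x : V) :
    ∃ l : K, ∀ f : Dual K V, f x = 0 → f (T' x) = l * f (T x) := by
  obtain ⟨a, b, hab⟩ := mem_span_pair.mp (mem_span_pair_of_codewordSupport_subset h x)
  exact ⟨b, fun f hf => by simp [← hab, hf]⟩

def untwistForm (σ : K ≃+* K) (g : V →ₛₗ[(σ : K →+* K)] K) : Dual K V where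
  toFun x := σ.symm (g x)
  map_add' x y := by simp
  map_smul' c x := by simp

theorem exists_ratio_on_hyperplane {σ : K ≃+* K} {T T' : V →ₛₗ[(σ : K →+* K)] V}
    (h : codewordSupport T' ⊆ codewordSupport T) (f : Dual K V) :
    ∃ l : K, ∀ x, f x = 0 → f (T' x) = l * f (T x) := by
  -- `σ⁻¹ ∘ f ∘ T'` vanishes on `ker f ⊓ ker (σ⁻¹ ∘ f ∘ T)`, so it is a combination of those forms.
  have hker : ⨅ i, ker (![f, untwistForm σ (f.comp T)] i) ≤ ker (untwistForm σ (f.comp T')) := by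
    intro x hx
    simp only [mem_iInf, Fin.forall_fin_two, mem_ker, untwistForm, coe_comp, Function.comp_apply,
      Matrix.cons_val_zero, Matrix.cons_val_one, LinearMap.coe_mk, AddHom.coe_mk,
      EmbeddingLike.map_eq_zero_iff] at hx ⊢
    exact apply_eq_zero_of_codewordSupport_subset h hx.1 hx.2
  obtain ⟨c, hc⟩ := (mem_span_range_iff_exists_fun K).mp (mem_span_of_iInf_ker_le_ker hker)
  refine ⟨σ (c 1), fun x hx => ?_⟩
  have := congr(σ ($hc x))
  simpa [untwistForm, hx] using this.symm

theorem four_le_natCard_of_ringHom_ne_id [Finite K] {σ : K →+* K} (hσ : σ ≠ RingHom.id K) :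
    4 ≤ Nat.card K := by
  obtain ⟨a, ha⟩ : ∃ a, σ a ≠ a := by
    by_contra! h
    exact hσ (RingHom.ext h)
  have h0 : a ≠ 0 := by rintro rfl; simp at ha
  have h1 : a ≠ 1 := by rintro rfl; simp at ha
  have hσ0 : σ a ≠ 0 := (map_ne_zero σ).mpr h0
  have hσ1 : σ a ≠ 1 := fun h => h1 (σ.injective (by rw [h, map_one]))
  classical
  have := Fintype.ofFinite K
  rw [Nat.card_eq_fintype_card]
  calc 4 = ({0, 1, a, σ a} : Finset K).card := by
        rw [Finset.card_insert_of_notMem, Finset.card_insert_of_notMem,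
          Finset.card_pair ha.symm] <;> simp [h0.symm, h1.symm, hσ0.symm, hσ1.symm]
    _ ≤ Fintype.card K := Finset.card_le_univ _

theorem eigenvalue_eq_of_notMem_span_singleton {σ : K →+* K} {S : V →ₛₗ[σ] V}
    (hS : ∀ x, S x ∈ K ∙ x) {x y : V} (hx : x ≠ 0) (hy : y ∉ K ∙ x) {α β : K}
    (hSx : S x = α • x) (hSy : S y = β • y) : α = β := by
  obtain ⟨γ, hγ⟩ := mem_span_singleton.mp (hS (x + y))
  have hindep : LinearIndependent K ![x, y] :=
    (LinearIndependent.pair_iff' hx).mpr fun a ha => hy (mem_span_singleton.mpr ⟨a, ha⟩)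
  have hsum : (α - γ) • x + (β - γ) • y = 0 := by
    have : α • x + β • y = γ • (x + y) := by rw [← hSx, ← hSy, ← map_add, hγ]
    linear_combination (norm := module) this
  obtain ⟨hαγ, hβγ⟩ := LinearIndependent.pair_iff.mp hindep _ _ hsum
  linear_combination hαγ - hβγ

theorem eq_zero_of_forall_mem_span_singleton [FiniteDimensional K V] (hV : 2 ≤ finrank K V)
    {σ : K →+* K} (hσ : σ ≠ RingHom.id K) {S : V →ₛₗ[σ] V} (hS : ∀ x, S x ∈ K ∙ x) : S = 0 := by
  obtain ⟨a, ha⟩ : ∃ a, σ a ≠ a := by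
    by_contra! h
    exact hσ (RingHom.ext h)
  have ha0 : a ≠ 0 := by rintro rfl; simp at ha
  ext x
  by_cases hx : x = 0
  · simp [hx]
  have hline : K ∙ x ≠ ⊤ := fun htop => by
    have := finrank_span_singleton (K := K) hx
    rw [htop, finrank_top] at this
    omega
  obtain ⟨y, -, hy⟩ := SetLike.exists_of_lt hline.lt_top
  obtain ⟨α, hα⟩ := mem_span_singleton.mp (hS x)
  obtain ⟨β, hβ⟩ := mem_span_singleton.mp (hS y)
  have hαβ := eigenvalue_eq_of_notMem_span_singleton hS hx hy hα.symm hβ.symm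
  -- The eigenvalue at `a • x` is that at `x` rescaled by `σ a / a`, yet both must equal `β`.
  have hax : S (a • x) = (σ a * α / a) • a • x := by
    rw [map_smulₛₗ, ← hα, smul_smul, smul_smul, div_mul_cancel₀ _ ha0]
  have hαβ' := eigenvalue_eq_of_notMem_span_singleton hS (smul_ne_zero ha0 hx)
    (by rwa [span_singleton_smul_eq (IsUnit.mk0 a ha0)]) hax hβ.symm
  have hα0 : α = 0 := by
    rw [← hαβ, div_eq_iff ha0] at hαβ'
    have : α * (σ a - a) = 0 := by linear_combination hαβ'
    exact (mul_eq_zero.mp this).resolve_right (sub_ne_zero.mpr ha)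
  simp [← hα, hα0]

theorem natCard_quotient_span_singleton [FiniteDimensional K V] {x : V} (hx : x ≠ 0) :
    Nat.card (V ⧸ K ∙ x) = Nat.card K ^ (finrank K V - 1) := by
  have := (K ∙ x).finrank_quotient_add_finrank
  rw [finrank_span_singleton hx] at this
  rw [natCard_eq_pow_finrank (K := K), ← this, Nat.add_sub_cancel]

section Counting

variable [Finite K] [FiniteDimensional K V] {σ : K →+* K} (T : V →ₛₗ[σ] V)

theorem ncard_span_pair_le (u v : V) : (span K {u, v} : Set V).ncard ≤ Nat.card K ^ 2 := by
  classical
  rw [← Nat.card_coe_set_eq, SetLike.coe_sort_coe, natCard_eq_pow_finrank (K := K)]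
  refine Nat.pow_le_pow_right Nat.card_pos ?_
  exact (finrank_span_le_card ({u, v} : Set V)).trans (by simpa using Finset.card_le_two)

theorem ncard_setOf_apply_mem_span_pair_diff_le {x : V} (hx : T x ∉ K ∙ x) :
    ({z | T z ∈ span K {z, x}} \ span K {T x, x}).ncard ≤ Nat.card K ^ (finrank K V - 1) - 1 := by
  have hx0 : x ≠ 0 := by rintro rfl; simp at hx
  have : Finite (V ⧸ K ∙ x) := Module.finite_of_finite K
  rw [← natCard_quotient_span_singleton hx0, ← Set.ncard_univ,
    ← Set.ncard_sdiff_singleton_of_mem (Set.mem_univ 0)]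
  refine Set.ncard_le_ncard_of_injOn (K ∙ x).mkQ (fun z hz => ?_) (fun z hz z' hz' hzz' => ?_)
    (Set.toFinite _)
  · refine ⟨Set.mem_univ _, fun h0 => hz.2 ?_⟩
    rw [Set.mem_singleton_iff, mkQ_apply, Quotient.mk_eq_zero] at h0
    exact span_mono (by simp) h0
  -- If `z - z' = c • x` with `c ≠ 0`, then `σ c • T x = T z - T z' ∈ span {z', x}`, and the
  -- exchange lemma puts `z'` into `span {T x, x}`.
  · obtain ⟨c, hc⟩ := (mem_span_singleton (R := K)).mp ((Submodule.Quotient.eq (K ∙ x)).mp hzz')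
    by_contra hne
    have hc0 : c ≠ 0 := by rintro rfl; exact hne (sub_eq_zero.mp (by simpa using hc.symm))
    have hle : span K {z, x} ≤ span K {z', x} := by
      rw [span_le, Set.insert_subset_iff, Set.singleton_subset_iff]
      refine ⟨?_, subset_span (by simp)⟩
      rw [show z = z' + c • x by rw [hc]; abel]
      exact add_mem (subset_span (by simp)) (smul_mem _ _ (subset_span (by simp)))
    have hTx : T x ∈ span K {z', x} := by
      rw [← smul_mem_iff _ ((map_ne_zero σ).mpr hc0), ← map_smulₛₗ, hc, map_sub]
      exact sub_mem (hle hz.1) hz'.1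
    exact hz'.2 (mem_span_insert_exchange hTx hx)

theorem ncard_setOf_apply_mem_span_pair_or_mem_le {x : V} (hx : T x ∉ K ∙ x) :
    {z | T z ∈ span K {z, x} ∨ z ∈ span K {T x, x}}.ncard
      ≤ Nat.card K ^ (finrank K V - 1) - 1 + Nat.card K ^ 2 := by
  calc _ = (({z | T z ∈ span K {z, x}} \ span K {T x, x}) ∪ (span K {T x, x} : Set V)).ncard := by
        congr 1
        ext z
        simp only [Set.mem_ofPred_eq, Set.mem_union, Set.mem_sdiff, SetLike.mem_coe]
        tauto
    _ ≤ _ := (Set.ncard_union_le _ _).trans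
        (add_le_add (ncard_setOf_apply_mem_span_pair_diff_le T hx) (ncard_span_pair_le _ _))

theorem exists_apply_notMem_span_pair_of_four_le_natCard (hK : 4 ≤ Nat.card K)
    (hV : 3 ≤ finrank K V) {x₀ x₁ : V} (h₀ : T x₀ ∉ K ∙ x₀) (h₁ : T x₁ ∉ K ∙ x₁) :
    ∃ z, (T z ∉ span K {z, x₀} ∧ z ∉ span K {T x₀, x₀}) ∧
      (T z ∉ span K {z, x₁} ∧ z ∉ span K {T x₁, x₁}) := by
  by_contra! hbad
  have : Finite V := Module.finite_of_finite K
  set q := Nat.card K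
  set N := q ^ (finrank K V - 1)
  have hcover : (Set.univ : Set V) ⊆ {z | T z ∈ span K {z, x₀} ∨ z ∈ span K {T x₀, x₀}} ∪
      {z | T z ∈ span K {z, x₁} ∨ z ∈ span K {T x₁, x₁}} := fun z _ => by
    have := hbad z
    simp only [Set.mem_union, Set.mem_ofPred_eq]
    tauto
  have hcard : q ^ finrank K V ≤ 2 * (N - 1 + q ^ 2) := by
    rw [← natCard_eq_pow_finrank, ← Set.ncard_univ]
    refine (Set.ncard_le_ncard hcover).trans ((Set.ncard_union_le _ _).trans ?_)
    linarith [ncard_setOf_apply_mem_span_pair_or_mem_le T h₀,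
      ncard_setOf_apply_mem_span_pair_or_mem_le T h₁]
  -- `2 (N - 1 + q ^ 2) < 4 N ≤ q N = q ^ d`
  have hN : 1 ≤ N := Nat.one_le_pow _ _ Nat.card_pos
  have hq2 : q ^ 2 ≤ N := Nat.pow_le_pow_right Nat.card_pos (by omega)
  have hqN : q ^ finrank K V = q * N := by
    rw [← pow_succ']; congr 1; omega
  have : 4 * N ≤ q * N := Nat.mul_le_mul_right _ hK
  omega

end Counting

theorem exists_common_hyperplane {σ : K →+* K} {T : V →ₛₗ[σ] V} {x z : V} (hx : T x ∉ K ∙ x)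
    (hz : T z ∉ span K {z, x}) (hxz : z ∉ span K {T x, x}) :
    ∃ f : Dual K V, f x = 0 ∧ f z = 0 ∧ f (T x) ≠ 0 ∧ f (T z) ≠ 0 := by
  have hTx : T x ∉ span K {z, x} := fun h => hxz (mem_span_insert_exchange h hx)
  obtain ⟨f, hf, hfx, hfz⟩ := exists_dual_le_ker_apply_ne_zero hTx hz
  exact ⟨f, hf (subset_span (by simp)), hf (subset_span (by simp)), hfx, hfz⟩

section Ratio

variable {σ : K ≃+* K} {T T' : V →ₛₗ[(σ : K →+* K)] V}

theorem ratio_eq_of_common_hyperplane (h : codewordSupport T' ⊆ codewordSupport T)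
    {f : Dual K V} {x y : V} (hx : f x = 0) (hy : f y = 0) (hTx : f (T x) ≠ 0)
    (hTy : f (T y) ≠ 0) {l m : K} (hl : ∀ g : Dual K V, g x = 0 → g (T' x) = l * g (T x))
    (hm : ∀ g : Dual K V, g y = 0 → g (T' y) = m * g (T y)) : l = m := by
  obtain ⟨c, hc⟩ := exists_ratio_on_hyperplane h f
  have hlc := (hl f hx).symm.trans (hc x hx)
  have hmc := (hm f hy).symm.trans (hc y hy)
  rw [mul_right_cancel₀ hTx hlc, mul_right_cancel₀ hTy hmc]

theorem ratio_eq_of_apply_notMem_span_singleton [Finite K] [FiniteDimensional K V]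
    (hK : 4 ≤ Nat.card K) (hV : 3 ≤ finrank K V) (h : codewordSupport T' ⊆ codewordSupport T)
    {x₀ x₁ : V} (h₀ : T x₀ ∉ K ∙ x₀) (h₁ : T x₁ ∉ K ∙ x₁) {l₀ l₁ : K}
    (hl₀ : ∀ f : Dual K V, f x₀ = 0 → f (T' x₀) = l₀ * f (T x₀))
    (hl₁ : ∀ f : Dual K V, f x₁ = 0 → f (T' x₁) = l₁ * f (T x₁)) : l₀ = l₁ := by
  obtain ⟨z, ⟨hz₀, hxz₀⟩, hz₁, hxz₁⟩ :=
    exists_apply_notMem_span_pair_of_four_le_natCard T hK hV h₀ h₁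
  obtain ⟨m, hm⟩ := exists_ratio_at_point h z
  obtain ⟨f₀, hf₀x, hf₀z, hf₀Tx, hf₀Tz⟩ := exists_common_hyperplane h₀ hz₀ hxz₀
  obtain ⟨f₁, hf₁x, hf₁z, hf₁Tx, hf₁Tz⟩ := exists_common_hyperplane h₁ hz₁ hxz₁
  exact (ratio_eq_of_common_hyperplane h hf₀x hf₀z hf₀Tx hf₀Tz hl₀ hm).trans
    (ratio_eq_of_common_hyperplane h hf₁z hf₁x hf₁Tz hf₁Tx hm hl₁)

theorem exists_uniform_ratio [Finite K] [FiniteDimensional K V] (hK : 4 ≤ Nat.card K)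
    (hV : 3 ≤ finrank K V) (h : codewordSupport T' ⊆ codewordSupport T) :
    ∃ l : K, ∀ (f : Dual K V) (x : V), f x = 0 → f (T' x) = l * f (T x) := by
  have hdegenerate : ∀ l x, T x ∈ K ∙ x → ∀ f : Dual K V, f x = 0 → f (T' x) = l * f (T x) := by
    intro l x hx f hfx
    obtain ⟨a, ha⟩ := mem_span_singleton.mp hx
    have hfTx : f (T x) = 0 := by rw [← ha, map_smul, hfx, smul_zero]
    rw [hfTx, mul_zero, apply_eq_zero_of_codewordSupport_subset h hfx hfTx]
  by_cases hgood : ∃ x₀, T x₀ ∉ K ∙ x₀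
  · obtain ⟨x₀, h₀⟩ := hgood
    obtain ⟨l, hl⟩ := exists_ratio_at_point h x₀
    refine ⟨l, fun f x hfx => ?_⟩
    by_cases hx : T x ∈ K ∙ x
    · exact hdegenerate l x hx f hfx
    obtain ⟨m, hm⟩ := exists_ratio_at_point h x
    rw [ratio_eq_of_apply_notMem_span_singleton hK hV h h₀ hx hl hm]
    exact hm f hfx
  · push Not at hgood
    exact ⟨0, fun f x => hdegenerate 0 x (hgood x) f⟩

theorem exists_eq_smul_of_codewordSupport_subset [Finite K] [FiniteDimensional K V]
    (hV : 3 ≤ finrank K V) (hσ : σ ≠ RingEquiv.refl K)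
    (h : codewordSupport T' ⊆ codewordSupport T) : ∃ l : K, T' = l • T := by
  have hσ' : (σ : K →+* K) ≠ RingHom.id K := fun h => hσ (RingEquiv.ext (RingHom.congr_fun h))
  obtain ⟨l, hl⟩ := exists_uniform_ratio (four_le_natCard_of_ringHom_ne_id hσ') hV h
  refine ⟨l, sub_eq_zero.mp (eq_zero_of_forall_mem_span_singleton (by omega) hσ' fun x => ?_)⟩
  by_contra hx
  obtain ⟨f, hf, hfx, -⟩ := exists_dual_le_ker_apply_ne_zero hx hx
  have hfx0 : f x = 0 := hf (mem_span_singleton_self x)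
  exact hfx (by simp [hl f x hfx0])

end Ratio

end Semilinear

namespace Matrix

variable {F ι : Type*} [Field F] [Fintype ι]

def mulVecSemilinear (σ : F →+* F) (M : Matrix ι ι F) : (ι → F) →ₛₗ[σ] (ι → F) where
  toFun x := M *ᵥ fun i => σ (x i)
  map_add' x y := by simp [← mulVec_add]; rfl
  map_smul' c x := by simp [← mulVec_smul]; rfl

theorem codewordSupport_mulVecSemilinear_subset [DecidableEq ι] {σ : F →+* F}
    {M M' : Matrix ι ι F}
    (h : ∀ x ξ : ι → F, ξ ⬝ᵥ x = 0 →
      (ξ ᵥ* M') ⬝ᵥ (fun i => σ (x i)) ≠ 0 → (ξ ᵥ* M) ⬝ᵥ (fun i => σ (x i)) ≠ 0) :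
    codewordSupport (mulVecSemilinear σ M') ⊆ codewordSupport (mulVecSemilinear σ M) := by
  rintro ⟨f, x⟩ ⟨hfx, hfT'x⟩
  obtain ⟨ξ, rfl⟩ := (dotProductEquiv F ι).surjective f
  refine ⟨hfx, ?_⟩
  simp only [dotProductEquiv_apply_apply, mulVecSemilinear, LinearMap.coe_mk, AddHom.coe_mk,
    dotProduct_mulVec] at hfx hfT'x ⊢
  exact h x ξ hfx hfT'x

theorem eq_smul_of_mulVecSemilinear_eq_smul {σ : F ≃+* F} {M M' : Matrix ι ι F} {l : F}
    (h : mulVecSemilinear (σ : F →+* F) M' = l • mulVecSemilinear (σ : F →+* F) M) :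
    M' = l • M := by
  refine ext_iff_mulVec.mpr fun y => ?_
  simpa [mulVecSemilinear, smul_mulVec] using LinearMap.congr_fun h fun i => σ.symm (y i)

end Matrix

open Matrix

theorem stmt_11 (F : Type) [Field F] [Fintype F] (n : ℕ) (hn : 2 ≤ n)
    (σ : F ≃+* F) (hσ : σ ≠ RingEquiv.refl F)
    (M M' : Matrix (Fin (n + 1)) (Fin (n + 1)) F)
    (hsupp : ∀ x ξ : Fin (n + 1) → F, ξ ⬝ᵥ x = 0 →
      (ξ ᵥ* M') ⬝ᵥ (fun i => σ (x i)) ≠ 0 → (ξ ᵥ* M) ⬝ᵥ (fun i => σ (x i)) ≠ 0) :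
    ∃ l : F, M' = l • M := by
  obtain ⟨l, hl⟩ := exists_eq_smul_of_codewordSupport_subset (by simpa using hn) hσ
    (codewordSupport_mulVecSemilinear_subset hsupp)
  exact ⟨l, eq_smul_of_mulVecSemilinear_eq_smul hl⟩
end

section
/- Let σ be the field automorphism of F_q given by σ(a) = a^r for all a ∈ F_q, where r > 1 is a power of the characteristic of F_q and r < q. If gcd((q^{n+1}−1)/(q−1), r−1) > 1, then there exists an invertible (n+1)×(n+1) matrix M over F_q such that θ_M = 0, i.e. no nonzero row vector ξ ∈ F_q^{n+1} satisfies ξ·M = λ·ξ^σ for any λ ∈ F_q. -/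
/-
Realise `F^{n+1}` as the degree `n + 1` extension `K` of `F`, with `|K| = Q = q^{n+1}`, and let
`Φ x = x ^ r`, a ring automorphism of `K` extending `σ`. Writing `ξ ↦ u = ∑ ξᵢ tᵢ` with
`Φ tᵢ = bᵢ` for a basis `b`, the equation `ξ M = l σ(ξ)` for the matrix `M` of `u ↦ g u`
becomes `g u = l u^r`, i.e. `g = l u^{r-1}`. For `c = gcd((Q-1)/(q-1), r-1)` both `l` and
`u^{r-1}` have order dividing `(Q-1)/c`, so a generator `g` of `Kˣ` is never of this form
when `c > 1`.
-/

open Matrix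

namespace FiniteField

theorem pow_pow_card_sub_one_div_eq_one {K : Type*} [Field K] [Fintype K] {c m : ℕ}
    (hcK : c ∣ Fintype.card K - 1) (hcm : c ∣ m) {u : K} (hu : u ≠ 0) :
    (u ^ m) ^ ((Fintype.card K - 1) / c) = 1 := by
  obtain ⟨m', rfl⟩ := hcm
  rw [← pow_mul, mul_comm c, mul_assoc, Nat.mul_div_cancel' hcK, pow_mul',
    pow_card_sub_one_eq_one u hu, one_pow]

variable {F K : Type*} [Field F] [Fintype F] [Field K] [Fintype K] [Algebra F K]

theorem card_sub_one_dvd_card_sub_one : Fintype.card F - 1 ∣ Fintype.card K - 1 := by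
  simpa [Module.card_eq_pow_finrank (K := F) (V := K)] using
    Nat.sub_dvd_pow_sub_pow (Fintype.card F) 1 (Module.finrank F K)

theorem algebraMap_pow_card_sub_one_div_eq_one {c : ℕ}
    (hc : c ∣ (Fintype.card K - 1) / (Fintype.card F - 1)) {a : F} (ha : a ≠ 0) :
    algebraMap F K a ^ ((Fintype.card K - 1) / c) = 1 := by
  obtain ⟨d, hd⟩ := hc
  have hK : Fintype.card K - 1 = c * (d * (Fintype.card F - 1)) := by
    rw [← mul_assoc, ← hd, Nat.div_mul_cancel card_sub_one_dvd_card_sub_one]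
  rcases c.eq_zero_or_pos with rfl | hc0
  · simp
  rw [hK, Nat.mul_div_cancel_left _ hc0, pow_mul', ← map_pow, pow_card_sub_one_eq_one a ha,
    map_one, one_pow]

theorem mul_ne_algebraMap_mul_pow {g : Kˣ} (hg : orderOf g = Fintype.card K - 1) {c r : ℕ}
    (hc : 1 < c) (hcd : c ∣ (Fintype.card K - 1) / (Fintype.card F - 1)) (hcr : c ∣ r - 1)
    (hr : 1 ≤ r) {u : K} (hu : u ≠ 0) (a : F) : (g : K) * u ≠ algebraMap F K a * u ^ r := by
  intro h
  have ha : a ≠ 0 := by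
    rintro rfl
    simp [hu] at h
  have hga : (g : K) = algebraMap F K a * u ^ (r - 1) := by
    refine mul_right_cancel₀ hu ?_
    rw [h, mul_assoc, ← pow_succ, Nat.sub_add_cancel hr]
  have hcK : c ∣ Fintype.card K - 1 :=
    hcd.trans (Nat.div_dvd_of_dvd card_sub_one_dvd_card_sub_one)
  have hpow : g ^ ((Fintype.card K - 1) / c) = 1 := by
    ext
    rw [Units.val_pow_eq_pow_val, hga, mul_pow, algebraMap_pow_card_sub_one_div_eq_one hcd ha,
      pow_pow_card_sub_one_div_eq_one hcK hcr hu, mul_one, Units.val_one]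
  have hK : 0 < Fintype.card K - 1 := Nat.sub_pos_of_lt Fintype.one_lt_card
  have hdvd := orderOf_dvd_of_pow_eq_one hpow
  rw [hg] at hdvd
  exact (Nat.div_lt_self hK hc).not_ge <|
    Nat.le_of_dvd (Nat.div_pos (Nat.le_of_dvd hK hcK) (by omega)) hdvd

end FiniteField

section

variable {F K ι : Type*} [Field F] [Field K] [Algebra F K] [Fintype ι]

theorem RingHom.map_linearCombination_eq_equivFun_symm {Φ : K →+* K} {σ : F →+* F}
    (hΦ : ∀ a, Φ (algebraMap F K a) = algebraMap F K (σ a)) (b : Module.Basis ι F K)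
    {t : ι → K} (ht : ∀ i, Φ (t i) = b i) (ξ : ι → F) :
    Φ (Fintype.linearCombination F t ξ) = b.equivFun.symm fun i => σ (ξ i) := by
  simp only [Fintype.linearCombination_apply, Module.Basis.equivFun_symm_apply, map_sum,
    Algebra.smul_def, map_mul, hΦ, ht]

theorem exists_isUnit_forall_vecMul_ne_smul [DecidableEq ι] (b : Module.Basis ι F K)
    {Φ : K →+* K} (hΦs : Function.Surjective Φ) {σ : F →+* F}
    (hΦ : ∀ a, Φ (algebraMap F K a) = algebraMap F K (σ a)) {g : K}
    (hg : ∀ u ≠ 0, ∀ a, g * u ≠ algebraMap F K a * Φ u) :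
    ∃ M : Matrix ι ι F, IsUnit M ∧ ∀ ξ ≠ 0, ∀ l : F, ξ ᵥ* M ≠ l • fun i => σ (ξ i) := by
  choose t ht using fun i => hΦs (b i)
  set L := Fintype.linearCombination F t
  have hΦL := Φ.map_linearCombination_eq_equivFun_symm hΦ b ht
  have hL : ∀ ξ ≠ 0, L ξ ≠ 0 := by
    intro ξ hξ hLξ
    have hσξ : (fun i => σ (ξ i)) = 0 := by
      rw [← b.equivFun.symm.map_eq_zero_iff, ← hΦL, hLξ, map_zero]
    exact hξ (funext fun i => σ.injective (by simpa using congrFun hσξ i))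
  set M := (LinearMap.toMatrix' (b.equivFun.toLinearMap ∘ₗ LinearMap.mulLeft F g ∘ₗ L))ᵀ
  have hM : ∀ ξ, ξ ᵥ* M = b.equivFun (g * L ξ) := fun ξ => by
    simp [M, vecMul_transpose, LinearMap.toMatrix'_mulVec]
  have hMσ : ∀ ξ ≠ 0, ∀ l : F, ξ ᵥ* M ≠ l • fun i => σ (ξ i) := by
    intro ξ hξ l h
    refine hg (L ξ) (hL ξ hξ) l (b.equivFun.injective ?_)
    rw [← hM, h, ← Algebra.smul_def, map_smul, hΦL, LinearEquiv.apply_symm_apply]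
  refine ⟨M, vecMul_injective_iff_isUnit.1 fun ξ η h => ?_, hMσ⟩
  by_contra hne
  refine hMσ (ξ - η) (sub_ne_zero.2 hne) 0 ?_
  rw [sub_vecMul, zero_smul]
  exact sub_eq_zero.2 h

end

theorem stmt_15_general (F : Type) [Field F] [Fintype F] (n : ℕ)
    (r : ℕ) (hr : 1 < r)
    (hrchar : ∃ k : ℕ, r = (ringChar F) ^ k)
    (σ : F ≃+* F) (hσ : ∀ a : F, σ a = a ^ r)
    (hgcd : 1 < Nat.gcd (((Fintype.card F) ^ (n + 1) - 1) / ((Fintype.card F) - 1)) (r - 1)) :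
    ∃ M : Matrix (Fin (n + 1)) (Fin (n + 1)) F, IsUnit M ∧
      ∀ ξ : Fin (n + 1) → F, ξ ≠ 0 → ∀ l : F, ξ ᵥ* M ≠ l • (fun i => σ (ξ i)) := by
  obtain ⟨k, hk⟩ := hrchar
  have : Fact (ringChar F).Prime := ⟨CharP.char_is_prime F _⟩
  let K := FiniteField.Extension F (ringChar F) (n + 1)
  let : Fintype K := Fintype.ofFinite K
  have : CharP K (ringChar F) := charP_of_injective_algebraMap (algebraMap F K).injective _
  have hK : Fintype.card K = Fintype.card F ^ (n + 1) := by
    simp only [Fintype.card_eq_nat_card, K, FiniteField.natCard_extension]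
  let Φ := iterateFrobenius K (ringChar F) k
  have hΦ : ∀ x, Φ x = x ^ r := fun x => by rw [iterateFrobenius_def, hk]
  obtain ⟨g, hg⟩ := IsCyclic.exists_ofOrder_eq_natCard (α := Kˣ)
  rw [Nat.card_units, Nat.card_eq_fintype_card] at hg
  have hΦσ : ∀ a, Φ (algebraMap F K a) = algebraMap F K ((σ : F →+* F) a) := fun a => by
    rw [hΦ, ← map_pow, RingEquiv.coe_toRingHom, hσ]
  have hgΦ : ∀ u ≠ 0, ∀ a, (g : K) * u ≠ algebraMap F K a * Φ u := fun u hu a => by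
    rw [hΦ]
    exact FiniteField.mul_ne_algebraMap_mul_pow hg hgcd (hK ▸ Nat.gcd_dvd_left _ _)
      (Nat.gcd_dvd_right _ _) hr.le hu a
  exact exists_isUnit_forall_vecMul_ne_smul
    (Module.finBasisOfFinrankEq F K (FiniteField.finrank_extension F _ (n + 1)))
    (Finite.injective_iff_surjective.1 Φ.injective) hΦσ hgΦ

theorem stmt_15 (F : Type) [Field F] [Fintype F] (n : ℕ) (hn : 2 ≤ n)
    (r : ℕ) (hr : 1 < r) (hrq : r < Fintype.card F)
    (hrchar : ∃ k : ℕ, r = (ringChar F) ^ k)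
    (σ : F ≃+* F) (hσ : ∀ a : F, σ a = a ^ r)
    (hgcd : 1 < Nat.gcd (((Fintype.card F) ^ (n + 1) - 1) / ((Fintype.card F) - 1)) (r - 1)) :
    ∃ M : Matrix (Fin (n + 1)) (Fin (n + 1)) F, IsUnit M ∧
      ∀ ξ : Fin (n + 1) → F, ξ ≠ 0 → ∀ l : F, ξ ᵥ* M ≠ l • (fun i => σ (ξ i)) :=
  stmt_15_general F n r hr hrchar σ hσ hgcd
end

section
/- Suppose q and n are both odd and σ is a field automorphism of F_q with σ ≠ id. Then the maximum of wt(c_M) over all nonzero (n+1)×(n+1) matrices M over F_q equals q^{n−1}·(q^{n+1}−1)/(q−1); equivalently, there exists a nonzero matrix M with θ_M = 0, and θ_M ≥ 0 for all M. -/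
open Matrix

set_option linter.unusedSectionVars false
set_option linter.unusedTactic false
set_option linter.unreachableTactic false
set_option linter.unusedVariables false
set_option maxHeartbeats 1600000

section
variable {F : Type} [Field F] [Fintype F] {W : Type} [AddCommGroup W] [Module F W]

lemma card_of_surj (φ : W →ₗ[F] F) (w0 : W) (hw0 : φ w0 = 1) :
    Nat.card W = Nat.card F * Nat.card (LinearMap.ker φ) := by
  have e : F × LinearMap.ker φ ≃ W :=
    { toFun := fun p => p.1 • w0 + p.2.1
      invFun := fun w => (φ w, ⟨w - φ w • w0, by simp [hw0]⟩)
      left_inv := by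
        rintro ⟨c, k, hk⟩
        have hφk : φ k = 0 := hk
        simp [hφk, hw0]
      right_inv := by intro w; simp [hw0] }
  rw [← Nat.card_congr e, Nat.card_prod]

lemma card_ne_of_surj (φ : W →ₗ[F] F) (w0 : W) (hw0 : φ w0 = 1) :
    Nat.card {w : W // φ w ≠ 0} = (Nat.card F - 1) * Nat.card (LinearMap.ker φ) := by
  have e : {c : F // c ≠ 0} × LinearMap.ker φ ≃ {w : W // φ w ≠ 0} :=
    { toFun := fun p => ⟨p.1.1 • w0 + p.2.1, by
        have hφk : φ p.2.1 = 0 := p.2.2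
        simp [hw0, hφk, p.1.2]⟩
      invFun := fun w => (⟨φ w.1, w.2⟩, ⟨w.1 - φ w.1 • w0, by simp [hw0]⟩)
      left_inv := by
        rintro ⟨⟨c, hc⟩, ⟨k, hk⟩⟩
        have hφk : φ k = 0 := hk
        simp [hφk, hw0]
      right_inv := by rintro ⟨w, hw⟩; simp [hw0] }
  rw [← Nat.card_congr e, Nat.card_prod]
  congr 1
  rw [← Nat.card_units, Nat.card_congr unitsEquivNeZero]

def dotL {m : ℕ} (a : Fin m → F) : (Fin m → F) →ₗ[F] F where
  toFun v := a ⬝ᵥ v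
  map_add' x y := dotProduct_add a x y
  map_smul' c x := dotProduct_smul c a x

@[simp] lemma dotL_apply {m : ℕ} (a v : Fin m → F) : dotL a v = a ⬝ᵥ v := rfl

lemma exists_dot_one {m : ℕ} {a : Fin m → F} (ha : a ≠ 0) : ∃ v, a ⬝ᵥ v = 1 := by
  obtain ⟨i, hi⟩ := Function.ne_iff.mp ha
  have hi' : a i ≠ 0 := by simpa using hi
  exact ⟨Pi.single i (a i)⁻¹, by simp [dotProduct_single, hi']⟩

lemma card_two {m : ℕ} (hm : 1 ≤ m) (a b : Fin (m + 1) → F) (ha : a ≠ 0)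
    (hb : ∀ c : F, b ≠ c • a) :
    Nat.card {v : Fin (m + 1) → F // a ⬝ᵥ v = 0 ∧ b ⬝ᵥ v ≠ 0}
      = (Fintype.card F - 1) * Fintype.card F ^ (m - 1) := by
  classical
  set q := Fintype.card F with hqdef
  obtain ⟨v0, hv0⟩ := exists_dot_one ha
  set K := LinearMap.ker (dotL a) with hK
  set ψ : K →ₗ[F] F := (dotL b).comp K.subtype with hψ
  -- ψ is nonzero
  have hψne : ∃ k : K, ψ k ≠ 0 := by
    by_contra h
    push_neg at h
    apply hb (b ⬝ᵥ v0)
    funext j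
    have hw : (Pi.single j 1 - (a j) • v0) ∈ K := by
      simp [hK, dotL, dotProduct_single, dotProduct_smul, hv0, dotProduct_sub]
    have := h ⟨_, hw⟩
    simp only [hψ, LinearMap.comp_apply, Submodule.subtype_apply, dotL_apply,
      dotProduct_sub, dotProduct_single, dotProduct_smul, smul_eq_mul, mul_one,
      sub_eq_zero] at this
    simp [this, Pi.smul_apply, smul_eq_mul, mul_comm]
  obtain ⟨k1, hk1⟩ := hψne
  have hKone : ∃ k0 : K, ψ k0 = 1 := ⟨(ψ k1)⁻¹ • k1, by simp [inv_mul_cancel₀ hk1]⟩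
  obtain ⟨k0, hk0⟩ := hKone
  -- cardinalities
  have h1 : Nat.card (Fin (m + 1) → F) = Nat.card F * Nat.card K :=
    card_of_surj (dotL a) v0 (by simpa using hv0)
  have h2 : Nat.card K = Nat.card F * Nat.card (LinearMap.ker ψ) :=
    card_of_surj ψ k0 hk0
  have h3 : Nat.card {w : K // ψ w ≠ 0} = (Nat.card F - 1) * Nat.card (LinearMap.ker ψ) :=
    card_ne_of_surj ψ k0 hk0
  have hNF : Nat.card F = q := Nat.card_eq_fintype_card
  have hV : Nat.card (Fin (m + 1) → F) = q ^ (m + 1) := by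
    rw [Nat.card_eq_fintype_card, Fintype.card_fun]
    simp [hqdef]
  have hq1 : 1 ≤ q := Fintype.card_pos
  have hkerψ : Nat.card (LinearMap.ker ψ) = q ^ (m - 1) := by
    have : q ^ (m + 1) = q * (q * Nat.card (LinearMap.ker ψ)) := by
      rw [← hV, h1, h2, hNF]
    have h4 : q ^ (m + 1) = q * q * q ^ (m - 1) := by
      rw [← pow_two, ← pow_add]
      congr 1
      omega
    apply Nat.eq_of_mul_eq_mul_left (show 0 < q * q by positivity)
    rw [mul_assoc, mul_assoc, ← this, ← mul_assoc, ← h4]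
  -- transfer subtype
  have e : {v : Fin (m + 1) → F // a ⬝ᵥ v = 0 ∧ b ⬝ᵥ v ≠ 0} ≃ {w : K // ψ w ≠ 0} :=
    { toFun := fun v => ⟨⟨v.1, v.2.1⟩, v.2.2⟩
      invFun := fun w => ⟨w.1.1, ⟨w.1.2, w.2⟩⟩
      left_inv := fun v => rfl
      right_inv := fun w => rfl }
  rw [Nat.card_congr e, h3, hkerψ, hNF]

lemma proj_card {m : ℕ} (P : (Fin (m + 1) → F) → Prop)
    (hP : ∀ (c : F), c ≠ 0 → ∀ v, P v → P (c • v)) :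
    (Fintype.card F - 1) * Nat.card {ξ : Projectivization F (Fin (m + 1) → F) // P ξ.rep}
      = Nat.card {v : Fin (m + 1) → F // v ≠ 0 ∧ P v} := by
  classical
  let f : Fˣ × {ξ : Projectivization F (Fin (m + 1) → F) // P ξ.rep} →
      {v : Fin (m + 1) → F // v ≠ 0 ∧ P v} :=
    fun p => ⟨(p.1 : F) • p.2.1.rep,
      smul_ne_zero (Units.ne_zero p.1) p.2.1.rep_nonzero,
      hP _ (Units.ne_zero p.1) _ p.2.2⟩
  have hbij : Function.Bijective f := by
    constructor
    · rintro ⟨c, ξ, hξ⟩ ⟨c', ξ', hξ'⟩ h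
      have h' : (c : F) • ξ.rep = (c' : F) • ξ'.rep := congrArg Subtype.val h
      have hmk : ξ = ξ' := by
        have h1 : Projectivization.mk F ((c : F) • ξ.rep)
            (smul_ne_zero (Units.ne_zero c) ξ.rep_nonzero) = ξ := by
          conv_rhs => rw [← Projectivization.mk_rep ξ]
          exact (Projectivization.mk_eq_mk_iff F _ _ _ _).mpr ⟨c, rfl⟩
        have h2 : Projectivization.mk F ((c' : F) • ξ'.rep)
            (smul_ne_zero (Units.ne_zero c') ξ'.rep_nonzero) = ξ' := by
          conv_rhs => rw [← Projectivization.mk_rep ξ']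
          exact (Projectivization.mk_eq_mk_iff F _ _ _ _).mpr ⟨c', rfl⟩
        rw [← h1, ← h2]
        congr 1
      subst hmk
      have hc : c = c' := by
        apply Units.ext
        have h0 := sub_eq_zero.mpr h'
        rw [← sub_smul] at h0
        rcases smul_eq_zero.mp h0 with h | h
        · exact sub_eq_zero.mp h
        · exact absurd h ξ.rep_nonzero
      subst hc
      rfl
    · rintro ⟨v, hv, hPv⟩
      obtain ⟨a, ha⟩ := Projectivization.exists_smul_eq_mk_rep F v hv
      refine ⟨⟨a⁻¹, ⟨Projectivization.mk F v hv, ?_⟩⟩, ?_⟩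
      · rw [← ha]
        exact hP _ (Units.ne_zero a) _ hPv
      · apply Subtype.ext
        show ((a⁻¹ : Fˣ) : F) • _ = v
        rw [← ha]
        simp [Units.smul_def, smul_smul]
  rw [← Nat.card_congr (Equiv.ofBijective f hbij), Nat.card_prod, Nat.card_units,
    Nat.card_eq_fintype_card (α := F)]

lemma card_ne_zero' {m : ℕ} :
    Nat.card {v : Fin (m + 1) → F // v ≠ 0} = Fintype.card F ^ (m + 1) - 1 := by
  classical
  have h := Nat.card_congr (Equiv.sumCompl (fun v : Fin (m + 1) → F => v = 0))
  rw [Nat.card_sum] at h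
  have h0 : Nat.card {v : Fin (m + 1) → F // v = 0} = 1 := by
    rw [Nat.card_eq_one_iff_unique]
    exact ⟨⟨by rintro ⟨a, rfl⟩ ⟨b, hb⟩; exact (Subtype.ext hb.symm)⟩, ⟨⟨0, rfl⟩⟩⟩
  have hV : Nat.card (Fin (m + 1) → F) = Fintype.card F ^ (m + 1) := by
    rw [Nat.card_eq_fintype_card, Fintype.card_fun, Fintype.card_fin]
  have hne : Nat.card {v : Fin (m + 1) → F // ¬ v = 0}
      = Nat.card {v : Fin (m + 1) → F // v ≠ 0} := rfl
  omega

lemma sq_mul_nonsq (hchar : ringChar F ≠ 2) {u v : F} (hu : ¬IsSquare u) (hv : ¬IsSquare v) :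
    IsSquare (u * v) := by
  have hu0 : u ≠ 0 := fun h => hu (h ▸ ⟨0, by simp⟩)
  have hv0 : v ≠ 0 := fun h => hv (h ▸ ⟨0, by simp⟩)
  have hdu := (FiniteField.pow_dichotomy hchar hu0).resolve_left
    (fun h => hu ((FiniteField.isSquare_iff hchar hu0).mpr h))
  have hdv := (FiniteField.pow_dichotomy hchar hv0).resolve_left
    (fun h => hv ((FiniteField.isSquare_iff hchar hv0).mpr h))
  refine (FiniteField.isSquare_iff hchar (mul_ne_zero hu0 hv0)).mpr ?_
  rw [mul_pow, hdu, hdv]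
  ring

lemma sigma_square (σ : F ≃+* F) (u : F) : IsSquare (σ u) ↔ IsSquare u := by
  constructor
  · rintro ⟨s, hs⟩
    refine ⟨σ.symm s, σ.injective ?_⟩
    rw [_root_.map_mul, hs]
    simp
  · rintro ⟨s, hs⟩
    exact ⟨σ s, by rw [hs, _root_.map_mul]⟩

lemma inv_square {u : F} (h : IsSquare u⁻¹) : IsSquare u := by
  obtain ⟨s, hs⟩ := h
  exact ⟨s⁻¹, by rw [← mul_inv, ← hs, inv_inv]⟩

lemma quot_square (hchar : ringChar F ≠ 2) (σ : F ≃+* F) (u : F) :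
    IsSquare (σ u * u⁻¹) := by
  by_cases h : IsSquare u
  · exact ((sigma_square σ u).mpr h).mul (h.inv)
  · exact sq_mul_nonsq hchar (fun hs => h ((sigma_square σ u).mp hs))
      (fun hs => h (inv_square hs))

/-- the block matrix with 2×2 blocks [[0,1],[c,0]] -/
def blockM {n : ℕ} (c : F) : Matrix (Fin (n + 1)) (Fin (n + 1)) F :=
  Matrix.of fun i j =>
    if j.val = i.val + 1 ∧ Even i.val then 1
    else if i.val = j.val + 1 ∧ Even j.val then c else 0

lemma blockM_vecMul_even {n : ℕ} (hodd : Odd n) (c : F) (ξ : Fin (n + 1) → F)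
    (j : Fin (n + 1)) (hj : Even j.val) :
    (ξ ᵥ* blockM c) j
      = ξ ⟨j.val + 1, by obtain ⟨t, ht⟩ := hj; obtain ⟨k, hk⟩ := hodd; omega⟩ * c := by
  have hjn : j.val + 1 < n + 1 := by
    obtain ⟨t, ht⟩ := hj; obtain ⟨k, hk⟩ := hodd; omega
  show (Finset.univ.sum fun i => ξ i * blockM c i j) = _
  rw [Finset.sum_eq_single (⟨j.val + 1, hjn⟩ : Fin (n + 1))]
  · have hent : blockM c ⟨j.val + 1, hjn⟩ j = c := by
      simp only [blockM, Matrix.of_apply, Fin.val_mk]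
      rw [if_neg (by rintro ⟨h1, -⟩; omega)]
      simp [hj]
    rw [hent]
  · intro i _ hi
    have hne : i.val ≠ j.val + 1 := by
      intro h; exact hi (Fin.ext h)
    have hent : blockM c i j = 0 := by
      simp only [blockM, Matrix.of_apply]
      rw [if_neg, if_neg]
      · rintro ⟨h1, -⟩; exact hne h1
      · rintro ⟨h1, h2⟩
        rw [Nat.even_iff] at hj h2; omega
    rw [hent, mul_zero]
  · intro h; exact absurd (Finset.mem_univ _) h

lemma blockM_vecMul_odd {n : ℕ} (c : F) (ξ : Fin (n + 1) → F)
    (j : Fin (n + 1)) (hj : ¬ Even j.val) :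
    (ξ ᵥ* blockM c) j = ξ ⟨j.val - 1, by omega⟩ := by
  have hj1 : 1 ≤ j.val := by
    rcases Nat.eq_zero_or_pos j.val with h | h
    · exact absurd (h ▸ Even.zero) hj
    · exact h
  show (Finset.univ.sum fun i => ξ i * blockM c i j) = _
  rw [Finset.sum_eq_single (⟨j.val - 1, by omega⟩ : Fin (n + 1))]
  · have hent : blockM c ⟨j.val - 1, by omega⟩ j = 1 := by
      simp only [blockM, Matrix.of_apply, Fin.val_mk]
      rw [if_pos]
      refine ⟨by omega, ?_⟩
      rw [Nat.even_iff] at *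
      omega
    rw [hent, mul_one]
  · intro i _ hi
    have hne : i.val ≠ j.val - 1 := by
      intro h; exact hi (Fin.ext h)
    have hent : blockM c i j = 0 := by
      simp only [blockM, Matrix.of_apply]
      rw [if_neg, if_neg]
      · rintro ⟨-, h2⟩; exact hj h2
      · rintro ⟨h1, h2⟩; omega
    rw [hent, mul_zero]
  · intro h; exact absurd (Finset.mem_univ _) h
lemma blockM_no_eig {n : ℕ} (hn : Odd n) (hq : Odd (Fintype.card F)) (σ : F ≃+* F)
    {c : F} (hc : ¬IsSquare c) :
    ∀ ξ : Fin (n + 1) → F, ξ ≠ 0 → ∀ l : F,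
      ξ ᵥ* blockM c ≠ l • (fun i => σ (ξ i)) := by
  have hchar : ringChar F ≠ 2 := by
    intro h
    have h2 := FiniteField.even_card_of_char_two h
    rw [Nat.odd_iff] at hq
    omega
  have hc0 : c ≠ 0 := fun h => hc (h ▸ ⟨0, by simp⟩)
  intro ξ hξ l heq
  have pair : ∀ (e : Fin (n + 1)) (he : Even e.val) (hb : e.val + 1 < n + 1),
      ξ ⟨e.val + 1, hb⟩ * c = l * σ (ξ e) ∧ ξ e = l * σ (ξ ⟨e.val + 1, hb⟩) := by
    intro e he hb
    have h1 := congrFun heq e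
    rw [blockM_vecMul_even hn c ξ e he] at h1
    simp only [Pi.smul_apply, smul_eq_mul] at h1
    have h2 := congrFun heq ⟨e.val + 1, hb⟩
    rw [blockM_vecMul_odd c ξ ⟨e.val + 1, hb⟩
      (by simp [Nat.even_add_one, he])] at h2
    simp only [Pi.smul_apply, smul_eq_mul, Nat.add_sub_cancel, Fin.eta] at h2
    exact ⟨h1, h2⟩
  have hbound : ∀ e : Fin (n + 1), Even e.val → e.val + 1 < n + 1 := by
    intro e he
    obtain ⟨t, ht⟩ := he
    obtain ⟨k, hk⟩ := hn
    have := e.isLt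
    omega
  by_cases hl : l = 0
  · subst hl
    apply hξ
    funext i
    by_cases hi : Even i.val
    · have := (pair i hi (hbound i hi)).2
      simpa using this
    · have hi1 : 1 ≤ i.val := by
        rcases Nat.eq_zero_or_pos i.val with h | h
        · exact absurd (h ▸ Even.zero) hi
        · exact h
      have hev : Even ((⟨i.val - 1, by omega⟩ : Fin (n + 1)) : ℕ) := by
        simp only [Fin.val_mk]
        rw [Nat.even_iff] at hi ⊢
        omega
      have hb := hbound _ hev
      have h := (pair _ hev hb).1
      simp only [Fin.val_mk] at h hb
      have hik : (⟨i.val - 1 + 1, hb⟩ : Fin (n + 1)) = i := Fin.ext (by simp; omega)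
      rw [hik] at h
      simp only [zero_mul, mul_eq_zero] at h
      exact h.resolve_right hc0
  · -- l ≠ 0 : find a nonzero pair
    obtain ⟨i, hi⟩ := Function.ne_iff.mp hξ
    have hi' : ξ i ≠ 0 := by simpa using hi
    -- get an even index e with (ξ e ≠ 0 ∨ ξ e1 ≠ 0)
    obtain ⟨e, he, hor⟩ :
        ∃ e : Fin (n + 1), ∃ he : Even e.val,
          ξ e ≠ 0 ∨ ξ ⟨e.val + 1, hbound e he⟩ ≠ 0 := by
      by_cases hie : Even i.val
      · exact ⟨i, hie, Or.inl hi'⟩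
      · have hi1 : 1 ≤ i.val := by
          rcases Nat.eq_zero_or_pos i.val with h | h
          · exact absurd (h ▸ Even.zero) hie
          · exact h
        have hev : Even ((⟨i.val - 1, by omega⟩ : Fin (n + 1)) : ℕ) := by
          simp only [Fin.val_mk]
          rw [Nat.even_iff] at hie ⊢
          omega
        refine ⟨⟨i.val - 1, by omega⟩, hev, Or.inr ?_⟩
        have : (⟨(⟨i.val - 1, by omega⟩ : Fin (n + 1)).val + 1,
            hbound _ hev⟩ : Fin (n + 1)) = i := Fin.ext (by simp; omega)
        rw [this]
        exact hi'
    set e1 : Fin (n + 1) := ⟨e.val + 1, hbound e he⟩ with he1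
    obtain ⟨Ea, Eo⟩ := pair e he (hbound e he)
    -- both coordinates are nonzero
    have hξe1 : ξ e1 ≠ 0 := by
      intro h0
      have h0' : ξ ⟨e.val + 1, hbound e he⟩ = 0 := h0
      have h1 : ξ e = 0 := by
        rw [Eo, h0']
        simp
      rcases hor with h | h
      · exact h h1
      · exact h h0
    have hξe : ξ e ≠ 0 := by
      intro h0
      apply hξe1
      have := Ea
      rw [h0] at this
      simp only [map_zero, mul_zero, mul_eq_zero] at this
      exact this.resolve_right hc0
    set u : F := ξ e * ξ e1 with hu
    have hu0 : u ≠ 0 := mul_ne_zero hξe hξe1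
    have h1 : c * u = l * l * σ u := by
      have hσu : σ u = σ (ξ e) * σ (ξ e1) := _root_.map_mul σ _ _
      rw [hu, hσu]
      linear_combination ξ e * Ea + (l * σ (ξ e)) * Eo
    have hc2 : c = (l * l) * (σ u * u⁻¹) := by
      field_simp
      linear_combination h1
    apply hc
    rw [hc2]
    exact IsSquare.mul ⟨l, rfl⟩ (quot_square hchar σ u)
lemma dot_sigma {k : ℕ} (σ : F ≃+* F) (w x : Fin k → F) :
    w ⬝ᵥ (fun i => σ (x i)) = σ ((fun i => σ.symm (w i)) ⬝ᵥ x) := by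
  simp only [dotProduct, map_sum, _root_.map_mul, RingEquiv.apply_symm_apply]

lemma sigma_dot {k : ℕ} (σ : F ≃+* F) (u v : Fin k → F) :
    (fun i => σ (u i)) ⬝ᵥ (fun i => σ (v i)) = σ (u ⬝ᵥ v) := by
  simp only [dotProduct, map_sum, _root_.map_mul]

lemma sigma_ne_zero (σ : F ≃+* F) (y : F) : σ y ≠ 0 ↔ y ≠ 0 := by
  constructor
  · intro h hy
    exact h (hy ▸ map_zero σ)
  · intro h hσ
    exact h (σ.injective (hσ.trans (map_zero σ).symm))

lemma xi_count {n : ℕ} (hn : 1 ≤ n) (σ : F ≃+* F) (M : Matrix (Fin (n + 1)) (Fin (n + 1)) F)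
    (ξ : Projectivization F (Fin (n + 1) → F))
    (h : ¬∃ l : F, ξ.rep ᵥ* M = l • (fun i => σ (ξ.rep i))) :
    Nat.card {x : Projectivization F (Fin (n + 1) → F) //
      ξ.rep ⬝ᵥ x.rep = 0 ∧ (ξ.rep ᵥ* M) ⬝ᵥ (fun i => σ (x.rep i)) ≠ 0}
      = Fintype.card F ^ (n - 1) := by
  classical
  set a : Fin (n + 1) → F := ξ.rep with ha
  set b : Fin (n + 1) → F := fun i => σ.symm ((a ᵥ* M) i) with hb
  have hcond : ∀ v : Fin (n + 1) → F,
      ((a ᵥ* M) ⬝ᵥ (fun i => σ (v i)) ≠ 0) ↔ b ⬝ᵥ v ≠ 0 := by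
    intro v
    rw [dot_sigma σ (a ᵥ* M) v]
    exact sigma_ne_zero σ _
  have e1 : {x : Projectivization F (Fin (n + 1) → F) //
      a ⬝ᵥ x.rep = 0 ∧ (a ᵥ* M) ⬝ᵥ (fun i => σ (x.rep i)) ≠ 0}
      ≃ {x : Projectivization F (Fin (n + 1) → F) //
      a ⬝ᵥ x.rep = 0 ∧ b ⬝ᵥ x.rep ≠ 0} :=
    Equiv.subtypeEquivRight (fun x => and_congr_right (fun _ => hcond x.rep))
  have ha0 : a ≠ 0 := ξ.rep_nonzero
  have hb0 : ∀ c : F, b ≠ c • a := by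
    intro c hbc
    apply h
    refine ⟨σ c, funext fun i => ?_⟩
    have : b i = c * a i := by rw [hbc]; simp
    have h2 : (a ᵥ* M) i = σ (b i) := by
      rw [hb]
      simp
    rw [h2, this, _root_.map_mul]
    simp
  have hinv : ∀ (c : F), c ≠ 0 → ∀ v, (a ⬝ᵥ v = 0 ∧ b ⬝ᵥ v ≠ 0) →
      (a ⬝ᵥ (c • v) = 0 ∧ b ⬝ᵥ (c • v) ≠ 0) := by
    intro c hc v ⟨h1, h2⟩
    constructor
    · rw [dotProduct_smul, h1, smul_zero]
    · rw [dotProduct_smul, smul_eq_mul]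
      exact mul_ne_zero hc h2
  have hpc := proj_card (fun v => a ⬝ᵥ v = 0 ∧ b ⬝ᵥ v ≠ 0) hinv
  have e2 : {v : Fin (n + 1) → F // v ≠ 0 ∧ (a ⬝ᵥ v = 0 ∧ b ⬝ᵥ v ≠ 0)}
      ≃ {v : Fin (n + 1) → F // a ⬝ᵥ v = 0 ∧ b ⬝ᵥ v ≠ 0} :=
    Equiv.subtypeEquivRight (fun v => by
      constructor
      · exact fun hv => hv.2
      · intro hv
        refine ⟨fun h0 => ?_, hv⟩
        apply hv.2
        rw [h0, dotProduct_zero])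
  have hct := card_two hn a b ha0 hb0
  rw [Nat.card_congr e2, hct] at hpc
  rw [Nat.card_congr e1]
  have hq2 : 1 < Fintype.card F := Fintype.one_lt_card
  apply Nat.eq_of_mul_eq_mul_left (show 0 < Fintype.card F - 1 by omega)
  rw [hpc]

lemma xi_count_le {n : ℕ} (hn : 1 ≤ n) (σ : F ≃+* F)
    (M : Matrix (Fin (n + 1)) (Fin (n + 1)) F)
    (ξ : Projectivization F (Fin (n + 1) → F)) :
    Nat.card {x : Projectivization F (Fin (n + 1) → F) //
      ξ.rep ⬝ᵥ x.rep = 0 ∧ (ξ.rep ᵥ* M) ⬝ᵥ (fun i => σ (x.rep i)) ≠ 0}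
      ≤ Fintype.card F ^ (n - 1) := by
  by_cases hex : ∃ l : F, ξ.rep ᵥ* M = l • (fun i => σ (ξ.rep i))
  · have : IsEmpty {x : Projectivization F (Fin (n + 1) → F) //
        ξ.rep ⬝ᵥ x.rep = 0 ∧ (ξ.rep ᵥ* M) ⬝ᵥ (fun i => σ (x.rep i)) ≠ 0} := by
      constructor
      rintro ⟨x, h1, h2⟩
      obtain ⟨l, hl⟩ := hex
      apply h2
      rw [hl, smul_dotProduct, sigma_dot σ ξ.rep x.rep, h1, map_zero, smul_zero]
    rw [Nat.card_of_isEmpty]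
    exact Nat.zero_le _
  · rw [xi_count hn σ M ξ hex]
end


theorem stmt_16 (F : Type) [Field F] [Fintype F] (n : ℕ) (hn : 2 ≤ n)
    (hq : Odd (Fintype.card F)) (hodd : Odd n)
    (σ : F ≃+* F) (hσ : σ ≠ RingEquiv.refl F) :
    IsGreatest {w : ℕ | ∃ M : Matrix (Fin (n + 1)) (Fin (n + 1)) F, M ≠ 0 ∧ wt σ M = w}
      ((Fintype.card F) ^ (n - 1) * (((Fintype.card F) ^ (n + 1) - 1) / ((Fintype.card F) - 1)))
    ∧ ∃ M : Matrix (Fin (n + 1)) (Fin (n + 1)) F, M ≠ 0 ∧ theta σ M = 0 := by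
  classical
  set q := Fintype.card F with hq'
  have hq2 : 1 < q := Fintype.one_lt_card
  have hchar : ringChar F ≠ 2 := by
    intro h
    have h2 := FiniteField.even_card_of_char_two h
    rw [Nat.odd_iff] at hq
    omega
  obtain ⟨c, hc⟩ := FiniteField.exists_nonsquare hchar
  haveI : Finite (Projectivization F (Fin (n + 1) → F)) := Quotient.finite _
  letI : Fintype (Projectivization F (Fin (n + 1) → F)) := Fintype.ofFinite _
  set N := Fintype.card (Projectivization F (Fin (n + 1) → F)) with hN
  have hwt : ∀ M : Matrix (Fin (n + 1)) (Fin (n + 1)) F, wt σ M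
      = ∑ ξ : Projectivization F (Fin (n + 1) → F),
          Nat.card {x : Projectivization F (Fin (n + 1) → F) //
            ξ.rep ⬝ᵥ x.rep = 0 ∧ (ξ.rep ᵥ* M) ⬝ᵥ (fun i => σ (x.rep i)) ≠ 0} := by
    intro M
    have e : {pq : Projectivization F (Fin (n + 1) → F) × Projectivization F (Fin (n + 1) → F) //
        pq.2.rep ⬝ᵥ pq.1.rep = 0 ∧ (pq.2.rep ᵥ* M) ⬝ᵥ (fun i => σ (pq.1.rep i)) ≠ 0}
        ≃ (ξ : Projectivization F (Fin (n + 1) → F)) ×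
          {x : Projectivization F (Fin (n + 1) → F) //
            ξ.rep ⬝ᵥ x.rep = 0 ∧ (ξ.rep ᵥ* M) ⬝ᵥ (fun i => σ (x.rep i)) ≠ 0} :=
      { toFun := fun s => ⟨s.1.2, ⟨s.1.1, s.2⟩⟩
        invFun := fun t => ⟨(t.2.1, t.1), t.2.2⟩
        left_inv := fun s => rfl
        right_inv := fun t => rfl }
    calc wt σ M = Nat.card _ := rfl
      _ = Nat.card ((ξ : Projectivization F (Fin (n + 1) → F)) ×
          {x : Projectivization F (Fin (n + 1) → F) //
            ξ.rep ⬝ᵥ x.rep = 0 ∧ (ξ.rep ᵥ* M) ⬝ᵥ (fun i => σ (x.rep i)) ≠ 0}) :=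
        Nat.card_congr e
      _ = ∑ ξ : Projectivization F (Fin (n + 1) → F),
          Fintype.card {x : Projectivization F (Fin (n + 1) → F) //
            ξ.rep ⬝ᵥ x.rep = 0 ∧ (ξ.rep ᵥ* M) ⬝ᵥ (fun i => σ (x.rep i)) ≠ 0} := by
        rw [Nat.card_eq_fintype_card, Fintype.card_sigma]
      _ = _ := Finset.sum_congr rfl (fun ξ _ => (Nat.card_eq_fintype_card).symm)
  have hNcard : (q - 1) * N = q ^ (n + 1) - 1 := by
    have hpc := proj_card (F := F) (m := n) (fun _ => True) (fun c hc v hv => trivial)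
    have eT : {ξ : Projectivization F (Fin (n + 1) → F) // True}
        ≃ Projectivization F (Fin (n + 1) → F) := Equiv.subtypeUnivEquiv (fun _ => trivial)
    have eV : {v : Fin (n + 1) → F // v ≠ 0 ∧ True} ≃ {v : Fin (n + 1) → F // v ≠ 0} :=
      Equiv.subtypeEquivRight (by simp)
    rw [Nat.card_congr eT, Nat.card_congr eV, card_ne_zero', Nat.card_eq_fintype_card] at hpc
    exact hpc
  have hdiv : (q ^ (n + 1) - 1) / (q - 1) = N :=
    Nat.div_eq_of_eq_mul_left (by omega) (by rw [← hNcard, mul_comm])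
  have hM0 : blockM (n := n) c ≠ 0 := by
    intro h0
    have h1 : blockM (n := n) c ⟨0, by omega⟩ ⟨1, by omega⟩ = 0 := by rw [h0]; rfl
    simp [blockM] at h1
  have hno : ∀ ξ : Projectivization F (Fin (n + 1) → F),
      ¬∃ l : F, ξ.rep ᵥ* blockM c = l • fun i => σ (ξ.rep i) := by
    rintro ξ ⟨l, hl⟩
    exact blockM_no_eig hodd hq σ hc ξ.rep ξ.rep_nonzero l hl
  have hwtM : wt σ (blockM (n := n) c) = q ^ (n - 1) * ((q ^ (n + 1) - 1) / (q - 1)) := by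
    rw [hwt, hdiv]
    rw [Finset.sum_congr rfl (fun ξ _ => xi_count (by omega) σ _ ξ (hno ξ))]
    rw [Finset.sum_const, Finset.card_univ, smul_eq_mul, mul_comm]
  refine ⟨⟨⟨blockM c, hM0, hwtM⟩, ?_⟩, ⟨blockM c, hM0, ?_⟩⟩
  · rintro w ⟨M', -, rfl⟩
    rw [hwt M', hdiv]
    calc ∑ ξ : Projectivization F (Fin (n + 1) → F),
        Nat.card {x : Projectivization F (Fin (n + 1) → F) //
          ξ.rep ⬝ᵥ x.rep = 0 ∧ (ξ.rep ᵥ* M') ⬝ᵥ (fun i => σ (x.rep i)) ≠ 0}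
        ≤ ∑ _ξ : Projectivization F (Fin (n + 1) → F), q ^ (n - 1) :=
          Finset.sum_le_sum (fun ξ _ => xi_count_le (by omega) σ M' ξ)
      _ = N * q ^ (n - 1) := by rw [Finset.sum_const, Finset.card_univ, smul_eq_mul]
      _ = q ^ (n - 1) * N := mul_comm _ _
  · haveI : IsEmpty {ξ : Projectivization F (Fin (n + 1) → F) //
        ∃ l : F, ξ.rep ᵥ* blockM c = l • fun i => σ (ξ.rep i)} :=
      ⟨fun s => hno s.1 s.2⟩
    exact Nat.card_of_isEmpty
end

section
/- Suppose q = s² and σ is the automorphism σ(a) = a^s of F_q. Let M be an (n+1)×(n+1) invertible matrix over F_q with M^σ = M^{−1} (σ applied entrywise) such that the semilinear map x ↦ M·x^σ fixes no projective point of PG(n,q), i.e. for every nonzero column vector x and every λ ∈ F_q one has M·x^σ ≠ λ·x. Then wt(c_M) = q^{n−1}·(q^{n+1}−1)/(q−1), the maximum possible weight; equivalently, the number of pairs of projective points ([x],[ξ]) with ξ·x = 0 and ξ·M·x^σ = 0 equals (q^{n+1}−1)(q^{n−1}−1)/(q−1)². -/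
/-!
Because `x ↦ M x^σ` fixes no projective point, `x` and `M x^σ` are linearly independent for every
`x ≠ 0`. So the dual vectors `ξ` with `ξ·x = 0` form a space of dimension `n`, and those with
moreover `ξ·M x^σ = 0` a subspace of dimension `n - 1`. Counting pairs of nonzero vectors
fibrewise over `x`, and dividing by `(q - 1)^2` since both conditions are invariant under rescaling
`x` and `ξ`, gives both counts.
-/

open Matrix

open scoped LinearAlgebra.Projectivization

theorem Nat.card_subtype_and_not {α : Type*} [Finite α] (A B : α → Prop) :
    Nat.card {x // A x ∧ ¬B x} = Nat.card {x // A x} - Nat.card {x // A x ∧ B x} := by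
  classical
  have h := Nat.card_congr ((Equiv.sumCompl fun x : {x // A x} => B x).symm.trans
    (Equiv.sumCongr (Equiv.subtypeSubtypeEquivSubtypeInter A B)
      (Equiv.subtypeSubtypeEquivSubtypeInter A (¬B ·))))
  rw [Nat.card_sum] at h
  omega

theorem Nat.card_ne_zero_and {M : Type*} [Finite M] [Zero M] {P : M → Prop} (h0 : P 0) :
    Nat.card {x // x ≠ 0 ∧ P x} = Nat.card {x // P x} - 1 := by
  have hzero : Nat.card {x // P x ∧ x = 0} = 1 := by
    rw [Nat.card_congr (Equiv.subtypeEquivRight fun x => and_iff_right_of_imp fun hx => hx ▸ h0),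
      Nat.card_unique]
  rw [← hzero, ← Nat.card_subtype_and_not]
  exact Nat.card_congr (Equiv.subtypeEquivRight fun _ => and_comm)

theorem Nat.card_pairs_of_card_fiber {α β : Type*} [Finite α] [Finite β] (S : α → Prop)
    (B : α → β → Prop) (c : ℕ) (hB : ∀ a, S a → Nat.card {b // B a b} = c) :
    Nat.card {ab : α × β // S ab.1 ∧ B ab.1 ab.2} = Nat.card {a // S a} * c := by
  have : Fintype {a // S a} := Fintype.ofFinite _
  let e : {ab : α × β // S ab.1 ∧ B ab.1 ab.2} ≃ Σ a : {a // S a}, {b // B a b} :=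
    { toFun x := ⟨⟨x.1.1, x.2.1⟩, ⟨x.1.2, x.2.2⟩⟩
      invFun y := ⟨(y.1.1, y.2.1), y.1.2, y.2.2⟩
      left_inv _ := rfl
      right_inv _ := rfl }
  rw [Nat.card_congr e, Nat.card_sigma, Finset.sum_congr rfl fun a _ => hB a.1 a.2,
    Finset.sum_const, Finset.card_univ, smul_eq_mul, Nat.card_eq_fintype_card]

namespace Projectivization

variable {K V : Type*} [DivisionRing K] [AddCommGroup V] [Module K V]

theorem mk_units_smul_rep (p : ℙ K V) (a : Kˣ) :
    mk K (a • p.rep) ((smul_ne_zero_iff_ne a).2 p.rep_nonzero) = p := by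
  conv_rhs => rw [← p.mk_rep]
  exact (mk_eq_mk_iff K _ _ _ _).2 ⟨a, rfl⟩

theorem units_smul_rep_injective :
    Function.Injective fun pa : ℙ K V × Kˣ => pa.2 • pa.1.rep := by
  rintro ⟨p, a⟩ ⟨p', a'⟩ h
  dsimp only at h
  obtain rfl : p = p' := by
    rw [← mk_units_smul_rep p a, ← mk_units_smul_rep p' a']
    simp_rw [h]
  obtain rfl : a = a' :=
    Units.ext (smul_left_injective K p.rep_nonzero (by simpa [Units.smul_def] using h))
  rfl

theorem exists_units_smul_rep_eq {v : V} (hv : v ≠ 0) :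
    ∃ (p : ℙ K V) (a : Kˣ), a • p.rep = v := by
  obtain ⟨a, ha⟩ := exists_smul_eq_mk_rep K v hv
  exact ⟨mk K v hv, a⁻¹, by rw [← ha, inv_smul_smul]⟩

theorem card_nonzero_pairs_eq_card_pairs_mul [Fintype K] (P : V → V → Prop)
    (hP : ∀ (a b : Kˣ) (v w : V), P (a • v) (b • w) ↔ P v w) :
    Nat.card {vw : V × V // vw.1 ≠ 0 ∧ vw.2 ≠ 0 ∧ P vw.1 vw.2} =
      Nat.card {pq : ℙ K V × ℙ K V // P pq.1.rep pq.2.rep} * (Fintype.card K - 1) ^ 2 := by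
  let G : {pq : ℙ K V × ℙ K V // P pq.1.rep pq.2.rep} × Kˣ × Kˣ →
      {vw : V × V // vw.1 ≠ 0 ∧ vw.2 ≠ 0 ∧ P vw.1 vw.2} := fun t =>
    ⟨(t.2.1 • t.1.1.1.rep, t.2.2 • t.1.1.2.rep), (smul_ne_zero_iff_ne _).2 (rep_nonzero _),
      (smul_ne_zero_iff_ne _).2 (rep_nonzero _), (hP _ _ _ _).2 t.1.2⟩
  have hG : Function.Bijective G := by
    constructor
    · rintro ⟨⟨⟨p, q⟩, _⟩, a, b⟩ ⟨⟨⟨p', q'⟩, _⟩, a', b'⟩ h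
      simp only [G, Subtype.mk.injEq, Prod.mk.injEq] at h
      obtain ⟨rfl, rfl⟩ :=
        Prod.ext_iff.1 (units_smul_rep_injective (a₁ := (p, a)) (a₂ := (p', a')) h.1)
      obtain ⟨rfl, rfl⟩ :=
        Prod.ext_iff.1 (units_smul_rep_injective (a₁ := (q, b)) (a₂ := (q', b')) h.2)
      rfl
    · rintro ⟨⟨v, w⟩, hv, hw, hvw⟩
      obtain ⟨p, a, rfl⟩ := exists_units_smul_rep_eq (K := K) hv
      obtain ⟨q, b, rfl⟩ := exists_units_smul_rep_eq (K := K) hw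
      exact ⟨⟨⟨(p, q), (hP a b _ _).1 hvw⟩, a, b⟩, rfl⟩
  rw [← Nat.card_congr (Equiv.ofBijective G hG), Nat.card_prod, Nat.card_prod, Nat.card_units,
    Nat.card_eq_fintype_card (α := K)]
  ring

theorem card_pairs_mul_of_card_fiber [Fintype K] [Finite V] (P : V → V → Prop)
    (hP : ∀ (a b : Kˣ) (v w : V), P (a • v) (b • w) ↔ P v w) (c : ℕ)
    (hc : ∀ v, v ≠ 0 → Nat.card {w // w ≠ 0 ∧ P v w} = c) :
    Nat.card {pq : ℙ K V × ℙ K V // P pq.1.rep pq.2.rep} * (Fintype.card K - 1) ^ 2 =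
      (Nat.card V - 1) * c := by
  classical
  have := Fintype.ofFinite V
  rw [← card_nonzero_pairs_eq_card_pairs_mul P hP,
    Nat.card_pairs_of_card_fiber (· ≠ 0) (fun v w => w ≠ 0 ∧ P v w) c hc,
    Nat.card_eq_fintype_card, Fintype.card_subtype_compl, Fintype.card_subtype_eq,
    Nat.card_eq_fintype_card]

end Projectivization

section DotProductCounts

variable {K ι : Type*} [Field K] [Fintype K] [Fintype ι]

theorem card_orthogonal_of_linearIndependent {κ : Type*} [Fintype κ] {v : κ → ι → K}
    (hv : LinearIndependent K v) :
    Nat.card {ξ : ι → K // ∀ i, ξ ⬝ᵥ v i = 0} =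
      Fintype.card K ^ (Fintype.card ι - Fintype.card κ) := by
  let A : Matrix κ ι K := Matrix.of v
  have hker (ξ : ι → K) : (∀ i, ξ ⬝ᵥ v i = 0) ↔ ξ ∈ LinearMap.ker A.mulVecLin := by
    simp [funext_iff, mulVec, dotProduct_comm, A]
  have hrank : Module.finrank K (LinearMap.range A.mulVecLin) = Fintype.card κ := hv.rank_matrix
  have hdim := A.mulVecLin.finrank_range_add_finrank_ker
  rw [Module.finrank_fintype_fun_eq_card] at hdim
  rw [Nat.card_congr (Equiv.subtypeEquivRight hker), Module.natCard_eq_pow_finrank (K := K),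
    Nat.card_eq_fintype_card]
  congr 1
  omega

theorem card_dotProduct_eq_zero {x : ι → K} (hx : x ≠ 0) :
    Nat.card {ξ : ι → K // ξ ⬝ᵥ x = 0} = Fintype.card K ^ (Fintype.card ι - 1) := by
  simpa using card_orthogonal_of_linearIndependent
    (linearIndependent_unique_iff.2 hx : LinearIndependent K ![x])

theorem card_dotProduct_eq_zero_and_eq_zero {x y : ι → K} (hxy : LinearIndependent K ![x, y]) :
    Nat.card {ξ : ι → K // ξ ⬝ᵥ x = 0 ∧ ξ ⬝ᵥ y = 0} =
      Fintype.card K ^ (Fintype.card ι - 2) := by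
  simpa [Fin.forall_fin_two] using card_orthogonal_of_linearIndependent hxy

theorem card_ne_zero_dotProduct_eq_zero_and_eq_zero {x y : ι → K}
    (hxy : LinearIndependent K ![x, y]) :
    Nat.card {ξ : ι → K // ξ ≠ 0 ∧ ξ ⬝ᵥ x = 0 ∧ ξ ⬝ᵥ y = 0} =
      Fintype.card K ^ (Fintype.card ι - 2) - 1 := by
  rw [Nat.card_ne_zero_and (by simp), card_dotProduct_eq_zero_and_eq_zero hxy]

theorem card_ne_zero_dotProduct_eq_zero_and_ne_zero {x y : ι → K}
    (hxy : LinearIndependent K ![x, y]) :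
    Nat.card {ξ : ι → K // ξ ≠ 0 ∧ ξ ⬝ᵥ x = 0 ∧ ξ ⬝ᵥ y ≠ 0} =
      Fintype.card K ^ (Fintype.card ι - 1) - Fintype.card K ^ (Fintype.card ι - 2) := by
  have hne (ξ : ι → K) : ξ ⬝ᵥ y ≠ 0 → ξ ≠ 0 := by rintro h rfl; simp at h
  rw [Nat.card_congr (Equiv.subtypeEquivRight fun ξ => and_iff_right_of_imp fun h => hne ξ h.2),
    Nat.card_subtype_and_not, card_dotProduct_eq_zero (x := x) (by simpa using hxy.ne_zero 0),
    card_dotProduct_eq_zero_and_eq_zero hxy]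

end DotProductCounts

def Matrix.semilinearMulVec {K ι : Type*} [CommSemiring K] [Fintype ι] (σ : K →+* K)
    (M : Matrix ι ι K) : (ι → K) →ₛₗ[σ] (ι → K) where
  toFun x := M *ᵥ fun i => σ (x i)
  map_add' x y := by simp only [Pi.add_apply, map_add, ← mulVec_add]; rfl
  map_smul' a x := by simp only [Pi.smul_apply, smul_eq_mul, map_mul, ← mulVec_smul]; rfl

section IncidentPairs

variable {K ι : Type*} [Field K] [Fintype K] [Fintype ι] {σ : K →+* K}
  (T : (ι → K) →ₛₗ[σ] (ι → K))

theorem card_incident_pairs_eq_zero_mul (hT : ∀ x, x ≠ 0 → ∀ l : K, T x ≠ l • x) :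
    Nat.card {pq : ℙ K (ι → K) × ℙ K (ι → K) //
        pq.2.rep ⬝ᵥ pq.1.rep = 0 ∧ pq.2.rep ⬝ᵥ T pq.1.rep = 0} * (Fintype.card K - 1) ^ 2 =
      (Fintype.card K ^ Fintype.card ι - 1) * (Fintype.card K ^ (Fintype.card ι - 2) - 1) := by
  rw [Projectivization.card_pairs_mul_of_card_fiber (fun v w => w ⬝ᵥ v = 0 ∧ w ⬝ᵥ T v = 0)
    (fun a b v w => by simp [Units.smul_def]) _ fun v hv =>
      card_ne_zero_dotProduct_eq_zero_and_eq_zero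
        ((LinearIndependent.pair_iff' hv).2 fun l h => hT v hv l h.symm),
    Nat.card_fun, Nat.card_eq_fintype_card, Nat.card_eq_fintype_card]

theorem card_incident_pairs_ne_zero_mul (hT : ∀ x, x ≠ 0 → ∀ l : K, T x ≠ l • x) :
    Nat.card {pq : ℙ K (ι → K) × ℙ K (ι → K) //
        pq.2.rep ⬝ᵥ pq.1.rep = 0 ∧ pq.2.rep ⬝ᵥ T pq.1.rep ≠ 0} * (Fintype.card K - 1) ^ 2 =
      (Fintype.card K ^ Fintype.card ι - 1) *
        (Fintype.card K ^ (Fintype.card ι - 1) - Fintype.card K ^ (Fintype.card ι - 2)) := by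
  rw [Projectivization.card_pairs_mul_of_card_fiber (fun v w => w ⬝ᵥ v = 0 ∧ w ⬝ᵥ T v ≠ 0)
    (fun a b v w => by simp [Units.smul_def]) _ fun v hv =>
      card_ne_zero_dotProduct_eq_zero_and_ne_zero
        ((LinearIndependent.pair_iff' hv).2 fun l h => hT v hv l h.symm),
    Nat.card_fun, Nat.card_eq_fintype_card, Nat.card_eq_fintype_card]

end IncidentPairs

theorem stmt_17_general (F : Type) [Field F] [Fintype F] (n : ℕ) (hn : 2 ≤ n)
    (σ : F ≃+* F)
    (M : Matrix (Fin (n + 1)) (Fin (n + 1)) F)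
    (hfpf : ∀ x : Fin (n + 1) → F, x ≠ 0 → ∀ l : F, M *ᵥ (fun i => σ (x i)) ≠ l • x) :
    wt σ M =
      (Fintype.card F) ^ (n - 1) * (((Fintype.card F) ^ (n + 1) - 1) / ((Fintype.card F) - 1))
    ∧ Nat.card {pq : Projectivization F (Fin (n + 1) → F) × Projectivization F (Fin (n + 1) → F) //
        pq.2.rep ⬝ᵥ pq.1.rep = 0 ∧ (pq.2.rep ᵥ* M) ⬝ᵥ (fun i => σ (pq.1.rep i)) = 0} =
      ((Fintype.card F) ^ (n + 1) - 1) * ((Fintype.card F) ^ (n - 1) - 1)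
        / ((Fintype.card F) - 1) ^ 2 := by
  let T := M.semilinearMulVec (σ : F →+* F)
  have h₁ := card_incident_pairs_ne_zero_mul T hfpf
  have h₀ := card_incident_pairs_eq_zero_mul T hfpf
  simp only [Fintype.card_fin, Nat.add_sub_cancel, show n + 1 - 2 = n - 1 by omega] at h₀ h₁
  simp_rw [wt, ← dotProduct_mulVec]
  set q := Fintype.card F
  have hq : 0 < q - 1 := Nat.sub_pos_of_lt Fintype.one_lt_card
  obtain ⟨c, hc⟩ : q - 1 ∣ q ^ (n + 1) - 1 := by simpa using Nat.sub_dvd_pow_sub_pow q 1 (n + 1)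
  have hpow : q ^ n - q ^ (n - 1) = q ^ (n - 1) * (q - 1) := by
    rw [Nat.mul_sub_one, ← pow_succ, Nat.sub_add_cancel (by omega)]
  refine ⟨Nat.eq_of_mul_eq_mul_right (by positivity : 0 < (q - 1) ^ 2) (h₁.trans ?_),
    (Nat.div_eq_of_eq_mul_left (by positivity) h₀.symm).symm⟩
  rw [hc, hpow, Nat.mul_div_cancel_left c hq]
  ring

theorem stmt_17 (F : Type) [Field F] [Fintype F] (n : ℕ) (hn : 2 ≤ n)
    (s : ℕ) (hq : Fintype.card F = s ^ 2)
    (σ : F ≃+* F) (hσ : ∀ a : F, σ a = a ^ s)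
    (M : Matrix (Fin (n + 1)) (Fin (n + 1)) F) (hM : IsUnit M)
    (hMσ : M.map ⇑σ = M⁻¹)
    (hfpf : ∀ x : Fin (n + 1) → F, x ≠ 0 → ∀ l : F, M *ᵥ (fun i => σ (x i)) ≠ l • x) :
    wt σ M =
      (Fintype.card F) ^ (n - 1) * (((Fintype.card F) ^ (n + 1) - 1) / ((Fintype.card F) - 1))
    ∧ Nat.card {pq : Projectivization F (Fin (n + 1) → F) × Projectivization F (Fin (n + 1) → F) //
        pq.2.rep ⬝ᵥ pq.1.rep = 0 ∧ (pq.2.rep ᵥ* M) ⬝ᵥ (fun i => σ (pq.1.rep i)) = 0} =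
      ((Fintype.card F) ^ (n + 1) - 1) * ((Fintype.card F) ^ (n - 1) - 1)
        / ((Fintype.card F) - 1) ^ 2 :=
  stmt_17_general F n hn σ M hfpf
end
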